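/- arXiv:1508.07202 — 6 statements merged into one kernel-verified Lean document; each statement's English description precedes it below -/
import Mathlib

section
/- Let G be a connected graph with minimum degree δ. If G contains two adjacent vertices each of degree δ, then the generalized 3-connectivity of G satisfies κ₃(G) ≤ δ − 1. -/
open SimpleGraph

/-- `T` is a pendant `S`-Steiner tree in `G`: a subtree of `G` containing `S` in which
every vertex of `S` has degree exactly one. -/
def IsPendantSteinerTree {V : Type*} (G : SimpleGraph V) (S : Set V) (T : G.Subgraph) : Prop :=
  T.coe.IsTree ∧ S ⊆ T.verts ∧ ∀ v ∈ S, (T.neighborSet v).ncard = 1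

/-- Two (pendant) `S`-Steiner trees are internally disjoint: edge-disjoint with
vertex intersection exactly `S`. -/
def InternallyDisjoint {V : Type*} (G : SimpleGraph V) (S : Set V) (T T' : G.Subgraph) : Prop :=
  T.edgeSet ∩ T'.edgeSet = ∅ ∧ T.verts ∩ T'.verts = S

/-- There exist `ℓ` pairwise internally disjoint pendant `S`-Steiner trees in `G`. -/
def HasPendantTrees {V : Type*} (G : SimpleGraph V) (S : Set V) (ℓ : ℕ) : Prop :=
  ∃ T : Fin ℓ → G.Subgraph, (∀ i, IsPendantSteinerTree G S (T i)) ∧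
    ∀ i j, i ≠ j → InternallyDisjoint G S (T i) (T j)

/-- The pendant tree `k`-connectivity `τ_k(G)`: the largest `ℓ` such that every `k`-set of
vertices admits `ℓ` pairwise internally disjoint pendant Steiner trees. -/
noncomputable def pendantConn {V : Type*} (G : SimpleGraph V) (k : ℕ) : ℕ :=
  sSup {ℓ | ∀ S : Finset V, S.card = k → HasPendantTrees G (↑S) ℓ}

/-- The minimum degree of a graph, via neighbour sets. -/
noncomputable def minDeg {V : Type*} (G : SimpleGraph V) : ℕ :=
  sInf (Set.range fun v => (G.neighborSet v).ncard)

/-- `G` is `k`-connected. -/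
def IsKConnected {V : Type*} [Fintype V] (G : SimpleGraph V) (k : ℕ) : Prop :=
  k < Fintype.card V ∧
    ∀ U : Finset V, U.card < k → (G.induce ((↑U : Set V)ᶜ)).Connected

/-- The vertex connectivity `κ(G)`. -/
noncomputable def vertexConn {V : Type*} [Fintype V] (G : SimpleGraph V) : ℕ :=
  sSup {k | IsKConnected G k}

/-- `T` is an `S`-Steiner tree in `G`. -/
def IsSteinerTree {V : Type*} (G : SimpleGraph V) (S : Set V) (T : G.Subgraph) : Prop :=
  T.coe.IsTree ∧ S ⊆ T.verts

/-- There exist `ℓ` pairwise internally disjoint `S`-Steiner trees in `G`. -/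
def HasSteinerTrees {V : Type*} (G : SimpleGraph V) (S : Set V) (ℓ : ℕ) : Prop :=
  ∃ T : Fin ℓ → G.Subgraph, (∀ i, IsSteinerTree G S (T i)) ∧
    ∀ i j, i ≠ j → InternallyDisjoint G S (T i) (T j)

/-- The generalized `k`-connectivity `κ_k(G)`. -/
noncomputable def genConn {V : Type*} (G : SimpleGraph V) (k : ℕ) : ℕ :=
  sSup {ℓ | ∀ S : Finset V, S.card = k → HasSteinerTrees G (↑S) ℓ}

/-!
Let `T₁, …, T_ℓ` be internally disjoint Steiner trees for `{u, v, w}`. Each `Tᵢ` is connected and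
contains `w`, so it leaves `{u, v}` along an edge other than `uv`, and if it avoids the edge `uv`
it has an edge at `u` and an edge at `v` other than `uv`. Since `uv` lies in at most one tree,
either every tree has an edge at `u` other than `uv` or every tree has one at `v`; by edge
disjointness these edges are distinct, so `ℓ ≤ deg u - 1` or `ℓ ≤ deg v - 1`, and both degrees
equal `δ`.
-/

namespace SimpleGraph

variable {V : Type*} {G : SimpleGraph V}

lemma Subgraph.Connected.exists_adj_of_mem_of_notMem {T : G.Subgraph} (hT : T.Connected)
    {s : Set V} {a b : V} (ha : a ∈ T.verts) (hb : b ∈ T.verts) (has : a ∈ s) (hbs : b ∉ s) :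
    ∃ x ∈ s, ∃ y ∉ s, T.Adj x y := by
  obtain ⟨p⟩ := hT ⟨a, ha⟩ ⟨b, hb⟩
  obtain ⟨d, -, hd₁, hd₂⟩ := p.exists_boundary_dart (Subtype.val ⁻¹' s) has hbs
  exact ⟨_, hd₁, _, hd₂, d.adj⟩

lemma card_le_ncard_neighborSet_sub_one {ι : Type*} [Finite ι] {T : ι → G.Subgraph}
    (hT : Pairwise fun i j => Disjoint (T i).edgeSet (T j).edgeSet)
    {a b : V} (hfin : (G.neighborSet a).Finite) (hab : G.Adj a b)
    (h : ∀ i, ∃ x, (T i).Adj a x ∧ x ≠ b) :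
    Nat.card ι ≤ (G.neighborSet a).ncard - 1 := by
  choose f hf hfb using h
  have hinj : Function.Injective fun i => (⟨f i, (T i).adj_sub (hf i), hfb i⟩ :
      ↥(G.neighborSet a \ {b})) := by
    intro i j hij
    by_contra hne
    have hfij : f i = f j := congrArg Subtype.val hij
    exact Set.disjoint_left.1 (hT hne) (Subgraph.mem_edgeSet.2 (hf i))
      (Subgraph.mem_edgeSet.2 (hfij ▸ hf j))
  have : Finite ↥(G.neighborSet a \ {b}) := hfin.sdiff.to_subtype
  rw [← Set.ncard_sdiff_singleton_of_mem (show b ∈ G.neighborSet a from hab),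
    ← Nat.card_coe_set_eq]
  exact Nat.card_le_card_of_injective _ hinj

lemma forall_exists_adj_ne_or_forall_exists_adj_ne {ι : Type*} {T : ι → G.Subgraph}
    (hT : Pairwise fun i j => Disjoint (T i).edgeSet (T j).edgeSet)
    (hconn : ∀ i, (T i).Connected) {u v w : V} (hu : ∀ i, u ∈ (T i).verts)
    (hv : ∀ i, v ∈ (T i).verts) (hw : ∀ i, w ∈ (T i).verts) (hwu : w ≠ u) (hwv : w ≠ v) :
    (∀ i, ∃ x, (T i).Adj u x ∧ x ≠ v) ∨ (∀ i, ∃ y, (T i).Adj v y ∧ y ≠ u) := by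
  have hleave : ∀ i, ¬ (T i).Adj u v →
      (∃ x, (T i).Adj u x ∧ x ≠ v) ∧ (∃ y, (T i).Adj v y ∧ y ≠ u) := by
    intro i huv
    obtain ⟨_, rfl, x, -, hx⟩ := (hconn i).exists_adj_of_mem_of_notMem (s := {u}) (hu i) (hw i)
      rfl hwu
    obtain ⟨_, rfl, y, -, hy⟩ := (hconn i).exists_adj_of_mem_of_notMem (s := {v}) (hv i) (hw i)
      rfl hwv
    exact ⟨⟨x, hx, by rintro rfl; exact huv hx⟩, ⟨y, hy, by rintro rfl; exact huv hy.symm⟩⟩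
  by_cases huv : ∃ i₀, (T i₀).Adj u v
  · obtain ⟨i₀, hi₀⟩ := huv
    have honly : ∀ i, i ≠ i₀ → ¬ (T i).Adj u v := fun i hi hadj =>
      Set.disjoint_left.1 (hT hi) (Subgraph.mem_edgeSet.2 hadj) (Subgraph.mem_edgeSet.2 hi₀)
    obtain ⟨x, hx, y, hy, hxy⟩ := (hconn i₀).exists_adj_of_mem_of_notMem (s := {u, v})
      (hu i₀) (hw i₀) (by simp) (by simp [hwu, hwv])
    simp only [Set.mem_insert_iff, Set.mem_singleton_iff, not_or] at hx hy
    rcases hx with rfl | rfl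
    · refine .inl fun i => ?_
      obtain rfl | hi := eq_or_ne i i₀
      exacts [⟨y, hxy, hy.2⟩, (hleave i (honly i hi)).1]
    · refine .inr fun i => ?_
      obtain rfl | hi := eq_or_ne i i₀
      exacts [⟨y, hxy, hy.1⟩, (hleave i (honly i hi)).2]
  · exact .inl fun i => (hleave i fun h => huv ⟨i, h⟩).1

lemma HasSteinerTrees.le_ncard_neighborSet_sub_one {u v w : V} {ℓ : ℕ}
    (h : HasSteinerTrees G {u, v, w} ℓ) (huv : G.Adj u v) (hwu : w ≠ u) (hwv : w ≠ v)
    (hu : (G.neighborSet u).Finite) (hv : (G.neighborSet v).Finite) :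
    ℓ ≤ (G.neighborSet u).ncard - 1 ∨ ℓ ≤ (G.neighborSet v).ncard - 1 := by
  obtain ⟨T, hT, hdisj⟩ := h
  have hedges : Pairwise fun i j => Disjoint (T i).edgeSet (T j).edgeSet := fun i j hij =>
    Set.disjoint_iff_inter_eq_empty.2 (hdisj i j hij).1
  rcases forall_exists_adj_ne_or_forall_exists_adj_ne hedges (fun i => ⟨(hT i).1.connected⟩)
    (fun i => (hT i).2 (by simp)) (fun i => (hT i).2 (by simp)) (fun i => (hT i).2 (by simp))
    hwu hwv with h | h
  · exact .inl (by simpa using card_le_ncard_neighborSet_sub_one hedges hu huv h)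
  · exact .inr (by simpa using card_le_ncard_neighborSet_sub_one hedges hv huv.symm h)

lemma genConn_le_of_forall_hasSteinerTrees {S : Finset V} {k b : ℕ} (hS : S.card = k)
    (h : ∀ ℓ, HasSteinerTrees G S ℓ → ℓ ≤ b) : genConn G k ≤ b :=
  csSup_le' fun ℓ hℓ => h ℓ (hℓ S hS)

lemma genConn_eq_zero_of_forall_card_ne {k : ℕ} (h : ∀ S : Finset V, S.card ≠ k) :
    genConn G k = 0 := by
  have huniv : {ℓ | ∀ S : Finset V, S.card = k → HasSteinerTrees G S ℓ} = Set.univ :=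
    Set.eq_univ_of_forall fun ℓ S hS => absurd hS (h S)
  rw [genConn, huniv, csSup_of_not_bddAbove not_bddAbove_univ, csSup_empty]
  rfl

end SimpleGraph

theorem stmt2_general {V : Type*} [Fintype V] (G : SimpleGraph V)
    (u v : V) (huv : G.Adj u v)
    (hu : (G.neighborSet u).ncard = minDeg G) (hv : (G.neighborSet v).ncard = minDeg G) :
    genConn G 3 ≤ minDeg G - 1 := by
  classical
  by_cases hw : ∃ w, w ≠ u ∧ w ≠ v
  · obtain ⟨w, hwu, hwv⟩ := hw
    refine genConn_le_of_forall_hasSteinerTrees (S := {u, v, w})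
      (Finset.card_eq_three.2 ⟨u, v, w, huv.ne, hwu.symm, hwv.symm, rfl⟩) fun ℓ hℓ => ?_
    rw [Finset.coe_insert, Finset.coe_pair] at hℓ
    rcases hℓ.le_ncard_neighborSet_sub_one huv hwu hwv (Set.toFinite _) (Set.toFinite _)
      with h | h
    exacts [hu ▸ h, hv ▸ h]
  · push Not at hw
    have hcard : ∀ S : Finset V, S.card ≠ 3 := fun S hS => by
      have hsub : S ⊆ {u, v} := fun x _ => by
        obtain rfl | hx := eq_or_ne x u
        exacts [Finset.mem_insert_self _ _, by simp [hw x hx]]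
      have := (Finset.card_le_card hsub).trans Finset.card_le_two
      omega
    simp [genConn_eq_zero_of_forall_card_ne hcard]

theorem stmt2 {V : Type*} [Fintype V] (G : SimpleGraph V) (hG : G.Connected)
    (u v : V) (huv : G.Adj u v)
    (hu : (G.neighborSet u).ncard = minDeg G) (hv : (G.neighborSet v).ncard = minDeg G) :
    genConn G 3 ≤ minDeg G - 1 :=
  stmt2_general G u v huv hu hv
end

section
/- For every graph G and every integer k ≥ 2, the pendant tree (k+1)-connectivity is at most the pendant tree k-connectivity: τ_{k+1}(G) ≤ τ_k(G). -/
/-!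
Let `S` be a `k`-set with `k ≥ 2` and `v ∉ S`. In a pendant `(S ∪ {v})`-Steiner tree the leaf `v`
has no neighbour in `S`: two adjacent leaves of a tree form the whole tree, which has room for
at most one vertex of `S`. Deleting `v` therefore leaves a tree in which every vertex of `S`
keeps its unique neighbour, i.e. a pendant `S`-Steiner tree, and deleting `v` from a family of
internally disjoint trees keeps them internally disjoint. When `G` has at most `k` vertices
there are no `(k+1)`-sets and `τ_{k+1}(G)` is the junk value `sSup ℕ = 0`.
-/

open SimpleGraph

lemma Set.eq_singleton_of_ncard_eq_one_of_mem {α : Type*} {s : Set α} {a : α} (hs : s.ncard = 1)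
    (ha : a ∈ s) : s = {a} := by
  obtain ⟨b, rfl⟩ := Set.ncard_eq_one.mp hs
  rw [Set.mem_singleton_iff.mp ha]

namespace SimpleGraph

variable {α : Type*} {H : SimpleGraph α}

lemma Preconnected.eq_or_eq_of_neighborSet_subset (hH : H.Preconnected) {a b : α}
    (ha : H.neighborSet a ⊆ {b}) (hb : H.neighborSet b ⊆ {a}) (u : α) : u = a ∨ u = b := by
  obtain ⟨p⟩ := hH a u
  suffices ∀ {x y : α} (q : H.Walk x y), (x = a ∨ x = b) → (y = a ∨ y = b) from this p (.inl rfl)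
  intro x y q
  induction q with
  | nil => exact id
  | cons hadj _ ih =>
    rintro (rfl | rfl)
    · exact ih (.inr (ha hadj))
    · exact ih (.inl (hb hadj))

end SimpleGraph

namespace SimpleGraph.Subgraph

variable {V : Type*} {G : SimpleGraph V} {T : G.Subgraph} {s : Set V}

lemma isAcyclic_coe_deleteVerts (hT : T.coe.IsAcyclic) (s : Set V) :
    (T.deleteVerts s).coe.IsAcyclic :=
  hT.comap (inclusion deleteVerts_le) (inclusion.injective deleteVerts_le)

lemma preconnected_coe_deleteVerts (hT : T.coe.Preconnected)
    (hs : ∀ v ∈ s, (T.neighborSet v).Subsingleton) : (T.deleteVerts s).coe.Preconnected := by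
  have hind : (T.coe.induce {x : T.verts | (x : V) ∉ s}).Preconnected :=
    hT.induce_of_degree_eq_one fun x hx a ha b hb =>
      Subtype.ext (hs x (not_not.mp hx) ha hb)
  refine hind.map
    ⟨fun x => ⟨x.1.1, x.1.2, x.2⟩, fun {x y} hxy => ⟨⟨x.1.2, x.2⟩, ⟨y.1.2, y.2⟩, hxy⟩⟩ ?_
  rintro ⟨x, hxT, hxs⟩
  exact ⟨⟨⟨x, hxT⟩, hxs⟩, rfl⟩

lemma isTree_coe_deleteVerts (hT : T.coe.IsTree) (hs : ∀ v ∈ s, (T.neighborSet v).Subsingleton)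
    (hne : (T.verts \ s).Nonempty) : (T.deleteVerts s).coe.IsTree :=
  ⟨(connected_iff _).mpr ⟨preconnected_coe_deleteVerts hT.connected.preconnected hs,
    hne.to_subtype⟩, isAcyclic_coe_deleteVerts hT.isAcyclic s⟩

end SimpleGraph.Subgraph

section PendantSteinerTree

open Subgraph

variable {V : Type*} {G : SimpleGraph V} {S : Set V} {v : V}

lemma IsPendantSteinerTree.not_adj_of_insert {T : G.Subgraph}
    (hT : IsPendantSteinerTree G (insert v S) T) (hvS : v ∉ S) (hS : S.Nontrivial)
    {x : V} (hx : x ∈ S) : ¬ T.Adj x v := by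
  obtain ⟨htree, hsub, hdeg⟩ := hT
  intro hxv
  have hx' : x ∈ insert v S := Set.mem_insert_of_mem v hx
  have hnx := Set.eq_singleton_of_ncard_eq_one_of_mem (hdeg x hx') hxv
  have hnv := Set.eq_singleton_of_ncard_eq_one_of_mem (hdeg v (Set.mem_insert v S)) hxv.symm
  obtain ⟨y, hy, hyx⟩ := hS.exists_ne x
  have hy' : y ∈ insert v S := Set.mem_insert_of_mem v hy
  have key := htree.connected.preconnected.eq_or_eq_of_neighborSet_subset
    (a := ⟨x, hsub hx'⟩) (b := ⟨v, hsub (Set.mem_insert v S)⟩)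
    (fun w hw => Subtype.ext (hnx.subset (show w.1 ∈ T.neighborSet x from hw)))
    (fun w hw => Subtype.ext (hnv.subset (show w.1 ∈ T.neighborSet v from hw))) ⟨y, hsub hy'⟩
  rcases key with h | h
  · exact hyx (congrArg Subtype.val h)
  · exact hvS (Subtype.mk.inj h ▸ hy)

lemma IsPendantSteinerTree.deleteVerts_of_insert {T : G.Subgraph}
    (hT : IsPendantSteinerTree G (insert v S) T) (hvS : v ∉ S) (hS : S.Nontrivial) :
    IsPendantSteinerTree G S (T.deleteVerts {v}) := by
  have ⟨htree, hsub, hdeg⟩ := hT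
  have hS_verts : S ⊆ (T.deleteVerts {v}).verts := fun x hx =>
    ⟨hsub (Set.mem_insert_of_mem v hx), fun h => hvS (Set.mem_singleton_iff.mp h ▸ hx)⟩
  have hv_leaf : ∀ w ∈ ({v} : Set V), (T.neighborSet w).Subsingleton := by
    rintro w rfl
    obtain ⟨u, hu⟩ := Set.ncard_eq_one.mp (hdeg w (Set.mem_insert w S))
    exact hu ▸ Set.subsingleton_singleton
  refine ⟨isTree_coe_deleteVerts htree hv_leaf (hS.nonempty.mono hS_verts), hS_verts,
    fun x hx => ?_⟩
  have hnbr : (T.deleteVerts {v}).neighborSet x = T.neighborSet x := by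
    ext y
    simp only [Subgraph.mem_neighborSet, deleteVerts_adj, Set.mem_singleton_iff]
    refine ⟨fun h => h.2.2.2.2, fun hxy => ⟨hxy.fst_mem, ?_, hxy.snd_mem, ?_, hxy⟩⟩
    · rintro rfl; exact hvS hx
    · rintro rfl; exact hT.not_adj_of_insert hvS hS hx hxy
  rw [hnbr]
  exact hdeg x (Set.mem_insert_of_mem v hx)

lemma HasPendantTrees.of_insert {ℓ : ℕ} (h : HasPendantTrees G (insert v S) ℓ) (hvS : v ∉ S)
    (hS : S.Nontrivial) : HasPendantTrees G S ℓ := by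
  obtain ⟨T, htree, hdisj⟩ := h
  refine ⟨fun i => (T i).deleteVerts {v}, fun i => (htree i).deleteVerts_of_insert hvS hS,
    fun i j hij => ⟨?_, ?_⟩⟩
  · exact Set.subset_empty_iff.mp <| (hdisj i j hij).1 ▸
      Set.inter_subset_inter (edgeSet_mono deleteVerts_le) (edgeSet_mono deleteVerts_le)
  · rw [deleteVerts_verts, deleteVerts_verts, ← Set.sdiff_inter_distrib_right, (hdisj i j hij).2,
      Set.insert_sdiff_self_of_notMem hvS]

lemma HasPendantTrees.le_card_edgeSet [Finite V] {ℓ : ℕ} (h : HasPendantTrees G S ℓ)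
    (hS : S.Nonempty) : ℓ ≤ Nat.card G.edgeSet := by
  obtain ⟨T, htree, hdisj⟩ := h
  obtain ⟨s, hs⟩ := hS
  have hedge : ∀ i, ∃ e, e ∈ (T i).edgeSet := fun i => by
    obtain ⟨y, hy⟩ := Set.ncard_eq_one.mp ((htree i).2.2 s hs)
    exact ⟨s(s, y), Subgraph.mem_edgeSet.mpr (show y ∈ (T i).neighborSet s from hy ▸ rfl)⟩
  choose e he using hedge
  have hinj : Function.Injective fun i => (⟨e i, (T i).edgeSet_subset (he i)⟩ : G.edgeSet) := by
    intro i j hij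
    simp only [Subtype.mk.injEq] at hij
    by_contra hne
    have hmem : e i ∈ (T i).edgeSet ∩ (T j).edgeSet := ⟨he i, hij ▸ he j⟩
    rw [(hdisj i j hne).1] at hmem
    exact hmem
  simpa using Nat.card_le_card_of_injective _ hinj

end PendantSteinerTree

section PendantConn

variable {V : Type*} {G : SimpleGraph V}

lemma hasPendantTrees_zero (S : Set V) : HasPendantTrees G S 0 :=
  ⟨finZeroElim, finZeroElim, finZeroElim⟩

lemma bddAbove_setOf_hasPendantTrees [Fintype V] {k : ℕ} (hk : 0 < k)
    (hkV : k ≤ Fintype.card V) :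
    BddAbove {ℓ | ∀ S : Finset V, S.card = k → HasPendantTrees G (↑S) ℓ} := by
  obtain ⟨S, -, hS⟩ := Finset.exists_subset_card_eq (s := (Finset.univ : Finset V)) hkV
  refine ⟨Nat.card G.edgeSet, fun ℓ hℓ => (hℓ S hS).le_card_edgeSet ?_⟩
  exact Finset.coe_nonempty.mpr (Finset.card_pos.mp (hS ▸ hk))

lemma pendantConn_eq_zero_of_card_lt [Fintype V] {k : ℕ} (hkV : Fintype.card V < k) :
    pendantConn G k = 0 := by
  have hall : {ℓ | ∀ S : Finset V, S.card = k → HasPendantTrees G (↑S) ℓ} = Set.univ :=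
    Set.eq_univ_of_forall fun ℓ S hS => absurd (hS ▸ S.card_le_univ) hkV.not_ge
  rw [pendantConn, hall, Nat.sSup_of_not_bddAbove not_bddAbove_univ]

end PendantConn

theorem stmt3 {V : Type*} [Fintype V] (G : SimpleGraph V) (k : ℕ) (hk : 2 ≤ k) :
    pendantConn G (k + 1) ≤ pendantConn G k := by
  classical
  rcases lt_or_ge k (Fintype.card V) with hkV | hVk
  · refine csSup_le_csSup (bddAbove_setOf_hasPendantTrees (by omega) hkV.le)
      ⟨0, fun S _ => hasPendantTrees_zero _⟩ fun ℓ hℓ S hS => ?_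
    obtain ⟨v, -, hvS⟩ := Finset.exists_mem_notMem_of_card_lt_card (t := Finset.univ)
      (hS ▸ hkV : S.card < Finset.univ.card)
    have hinsert := hℓ (insert v S) (by rw [Finset.card_insert_of_notMem hvS, hS])
    rw [Finset.coe_insert] at hinsert
    exact hinsert.of_insert (Finset.mem_coe.not.mpr hvS)
      (Finset.one_lt_card_iff_nontrivial.mp (by omega))
  · rw [pendantConn_eq_zero_of_card_lt (by omega)]
    exact Nat.zero_le _
end

section
/- In the Cartesian product P_n □ H of a path with a connected graph H with τ₃(H) = ℓ, if three vertices x, y, z all lie in the same copy H(u_i) of H, then there exist at least ℓ + 1 pairwise internally disjoint pendant {x,y,z}-Steiner trees in P_n □ H, provided n ≥ 2. -/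
open SimpleGraph

/-!
The `ℓ` trees of `H`, copied into the layer `H(u)`, stay pairwise internally disjoint. One more
tree comes from a neighbour `u'` of `u` on the path: a spanning tree of `H(u')` together with the
rungs `(u, x) — (u', x)` for `x ∈ S`. Each `(u, x)` has no other neighbour there, so it is a leaf,
and this tree meets `H(u)` only in `S`, hence is internally disjoint from the copied ones.
-/

namespace SimpleGraph

variable {U V : Type*} {G : SimpleGraph U} {H : SimpleGraph V}

lemma Subgraph.Connected.exists_isTree_le {K : G.Subgraph} (hK : K.Connected) :
    ∃ T ≤ K, T.verts = K.verts ∧ T.coe.IsTree := by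
  obtain ⟨T, hTK, hT⟩ := hK.coe.exists_isTree_le
  let T' : K.coe.Subgraph := SimpleGraph.toSubgraph T hTK
  refine ⟨K.coeSubgraph T', Subgraph.coeSubgraph_le T', by simp [T'], ?_⟩
  have e : T ≃g T'.coe := T'.spanningCoeEquivCoeOfSpanning (toSubgraph.isSpanning T hTK)
  exact (Iso.isTree_iff (e.trans ((K.hom.toCopy Subtype.val_injective).isoSubgraphMap T'))).mp hT

lemma Subgraph.ncard_neighborSet_eq_one {T : G.Subgraph} (hT : T.Connected) {v w : U}
    (hv : v ∈ T.verts) (hw : w ∈ T.verts) (hvw : v ≠ w) (h : T.neighborSet v ⊆ {w}) :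
    (T.neighborSet v).ncard = 1 := by
  have : Nontrivial T.verts := ⟨⟨⟨v, hv⟩, ⟨w, hw⟩, by simpa using hvw⟩⟩
  obtain ⟨x, hx⟩ := hT.preconnected.exists_adj_of_nontrivial ⟨v, hv⟩
  rw [(Set.Nonempty.subset_singleton_iff (⟨x, hx⟩ : (T.neighborSet v).Nonempty)).mp h,
    Set.ncard_singleton]

lemma Subgraph.neighborSet_map {W : Type*} {G' : SimpleGraph W} (f : Copy G G') (T : G.Subgraph)
    (v : U) :
    (T.map f.toHom).neighborSet (f v) = f '' T.neighborSet v := by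
  ext w
  simp only [Subgraph.mem_neighborSet, Subgraph.map_adj, Relation.Map, Copy.toHom_apply,
    Set.mem_image]
  constructor
  · rintro ⟨a, b, h, ha, rfl⟩
    exact ⟨b, f.injective ha ▸ h, rfl⟩
  · rintro ⟨b, h, rfl⟩
    exact ⟨v, b, h, rfl, rfl⟩

end SimpleGraph

section PendantTrees

variable {U W : Type*} {G : SimpleGraph U} {G' : SimpleGraph W} {S : Set U} {T T' : G.Subgraph}

lemma IsPendantSteinerTree.map (f : Copy G G') (hT : IsPendantSteinerTree G S T) :
    IsPendantSteinerTree G' (f '' S) (T.map f.toHom) := by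
  obtain ⟨htree, hS, hdeg⟩ := hT
  refine ⟨(Iso.isTree_iff (f.isoSubgraphMap T)).mp htree, Set.image_mono hS, ?_⟩
  rintro _ ⟨v, hv, rfl⟩
  rw [Subgraph.neighborSet_map, Set.ncard_image_of_injective (f := f) _ f.injective, hdeg v hv]

lemma InternallyDisjoint.map (f : Copy G G') (h : InternallyDisjoint G S T T') :
    InternallyDisjoint G' (f '' S) (T.map f.toHom) (T'.map f.toHom) := by
  obtain ⟨hE, hV⟩ := h
  constructor
  · rw [Subgraph.edgeSet_map, Subgraph.edgeSet_map,
      ← Set.image_inter (Sym2.map.injective f.injective), hE, Set.image_empty]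
  · rw [Subgraph.map_verts, Subgraph.map_verts, ← Set.image_inter f.injective, hV]
    rfl

lemma InternallyDisjoint.symm (h : InternallyDisjoint G S T T') : InternallyDisjoint G S T' T :=
  ⟨Set.inter_comm T.edgeSet _ ▸ h.1, Set.inter_comm T.verts _ ▸ h.2⟩

/-- An edge shared by `T` and `T'` would join two vertices of `S`. -/
lemma internallyDisjoint_of_verts_inter_subset (hT : S ⊆ T.verts) (hT' : S ⊆ T'.verts)
    (hV : T.verts ∩ T'.verts ⊆ S) (hS : ∀ p ∈ S, ∀ q ∈ S, ¬T'.Adj p q) :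
    InternallyDisjoint G S T T' := by
  refine ⟨?_, hV.antisymm (Set.subset_inter hT hT')⟩
  rw [Set.eq_empty_iff_forall_notMem]
  refine Sym2.ind fun p q ⟨hpq, hpq'⟩ => ?_
  rw [Subgraph.mem_edgeSet] at hpq hpq'
  exact hS p (hV ⟨T.edge_vert hpq, T'.edge_vert hpq'⟩) q
    (hV ⟨T.edge_vert hpq.symm, T'.edge_vert hpq'.symm⟩) hpq'

lemma hasPendantTrees_succ {ℓ : ℕ} {T : Fin ℓ → G.Subgraph}
    (hT : ∀ i, IsPendantSteinerTree G S (T i))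
    (hdisj : ∀ i j, i ≠ j → InternallyDisjoint G S (T i) (T j))
    (hT' : IsPendantSteinerTree G S T') (hdisj' : ∀ i, InternallyDisjoint G S (T i) T') :
    HasPendantTrees G S (ℓ + 1) := by
  refine ⟨Fin.cons T' T, Fin.cases hT' hT, fun i j hij => ?_⟩
  cases i using Fin.cases with
  | zero =>
    cases j using Fin.cases with
    | zero => exact absurd rfl hij
    | succ j => exact (hdisj' j).symm
  | succ i =>
    cases j using Fin.cases with
    | zero => exact hdisj' i
    | succ j => exact hdisj i j (fun h => hij (h ▸ rfl))

end PendantTrees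

namespace SimpleGraph

/-- The copy `H(u')` of `H` in `G □ H` together with the rungs `(u, x) — (u', x)`, `x ∈ S`. -/
def rungSubgraph {U V : Type*} (G : SimpleGraph U) (H : SimpleGraph V) (u u' : U) (S : Set V) :
    (G □ H).Subgraph where
  verts := Prod.mk u '' S ∪ {p | p.1 = u'}
  Adj p q := (G □ H).Adj p q ∧
    (p.1 = u' ∧ q.1 = u' ∨ p.2 = q.2 ∧ p.2 ∈ S ∧ s(p.1, q.1) = s(u, u'))
  adj_sub h := h.1
  edge_vert := by
    rintro ⟨p₁, p₂⟩ q ⟨-, ⟨rfl, -⟩ | ⟨-, hp, he⟩⟩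
    · exact Or.inr rfl
    · rcases Sym2.eq_iff.mp he with ⟨rfl, -⟩ | ⟨rfl, -⟩
      · exact Or.inl ⟨p₂, hp, rfl⟩
      · exact Or.inr rfl
  symm := by
    constructor
    rintro p q ⟨hpq, ⟨hp, hq⟩ | ⟨h₂, hS, he⟩⟩
    · exact ⟨hpq.symm, Or.inl ⟨hq, hp⟩⟩
    · exact ⟨hpq.symm, Or.inr ⟨h₂.symm, h₂ ▸ hS, Sym2.eq_swap.trans he⟩⟩

variable {U V : Type*} {G : SimpleGraph U} {H : SimpleGraph V} {u u' : U} {S : Set V}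

lemma rungSubgraph_adj_fst {p q : U × V} (h : (rungSubgraph G H u u' S).Adj p q) :
    p.1 = u' ∨ q.1 = u' := by
  rcases h with ⟨-, ⟨hp, -⟩ | ⟨-, -, he⟩⟩
  · exact Or.inl hp
  · exact (Sym2.mem_iff.mp (he ▸ Sym2.mem_mk_right u u')).imp Eq.symm Eq.symm

lemma rungSubgraph_neighborSet_subset (hne : u ≠ u') {x : V} :
    (rungSubgraph G H u u' S).neighborSet (u, x) ⊆ {(u', x)} := by
  rintro ⟨q₁, q₂⟩ ⟨-, ⟨hu, -⟩ | ⟨rfl, -, he⟩⟩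
  · exact absurd hu hne
  · rcases Sym2.eq_iff.mp he with ⟨-, rfl⟩ | ⟨hu, -⟩
    · rfl
    · exact absurd hu hne

lemma rungSubgraph_connected (hH : H.Connected) (huu' : G.Adj u u') :
    (rungSubgraph G H u u' S).Connected := by
  set K := rungSubgraph G H u u' S
  let layer : H →g K.coe :=
    ⟨fun x => ⟨(u', x), Or.inr rfl⟩, fun h => ⟨boxProd_adj_right.mpr h, Or.inl ⟨rfl, rfl⟩⟩⟩
  obtain ⟨x₀⟩ := hH.nonempty
  rw [Subgraph.connected_iff', connected_iff_exists_forall_reachable]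
  refine ⟨layer x₀, ?_⟩
  rintro ⟨p, ⟨y, hy, rfl⟩ | hp⟩
  · have rung : K.coe.Adj (layer y) ⟨(u, y), Or.inl ⟨y, hy, rfl⟩⟩ :=
      ⟨boxProd_adj_left.mpr huu'.symm, Or.inr ⟨rfl, hy, Sym2.eq_swap⟩⟩
    exact ((hH x₀ y).map layer).trans rung.reachable
  · obtain ⟨p₁, y⟩ := p
    obtain rfl : p₁ = u' := hp
    exact (hH x₀ y).map layer

end SimpleGraph

theorem HasPendantTrees.boxProd_succ {U V : Type*} {G : SimpleGraph U} {H : SimpleGraph V}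
    {u u' : U} {S : Set V} {ℓ : ℕ} (hH : H.Connected) (huu' : G.Adj u u')
    (h : HasPendantTrees H S ℓ) : HasPendantTrees (G □ H) (Prod.mk u '' S) (ℓ + 1) := by
  obtain ⟨T, hT, hdisj⟩ := h
  let f : Copy H (G □ H) := (boxProdRight G H u).toCopy
  obtain ⟨X, hXK, hXverts, hXtree⟩ := (rungSubgraph_connected (S := S) hH huu').exists_isTree_le
  have hSX : Prod.mk u '' S ⊆ X.verts := hXverts ▸ Set.subset_union_left
  refine hasPendantTrees_succ (fun i => (hT i).map f) (fun i j hij => (hdisj i j hij).map f)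
    ⟨hXtree, hSX, ?_⟩ fun i => ?_
  · rintro _ ⟨x, hx, rfl⟩
    exact Subgraph.ncard_neighborSet_eq_one ⟨hXtree.connected⟩ (hSX ⟨x, hx, rfl⟩)
      (hXverts ▸ Or.inr rfl) (fun h => huu'.ne (congrArg Prod.fst h))
      ((Subgraph.neighborSet_subset_of_subgraph hXK _).trans
        (rungSubgraph_neighborSet_subset huu'.ne))
  · refine internallyDisjoint_of_verts_inter_subset ((hT i).map f).2.1 hSX ?_ ?_
    · rintro _ ⟨⟨x, -, rfl⟩, hX⟩
      rw [hXverts] at hX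
      exact hX.resolve_right huu'.ne
    · rintro _ ⟨x, -, rfl⟩ _ ⟨y, -, rfl⟩ hadj
      rcases rungSubgraph_adj_fst (hXK.2 hadj) with h | h <;> exact huu'.ne h

theorem stmt6_general {V : Type*} (H : SimpleGraph V) (hH : H.Connected) (n ℓ : ℕ)
    (hn : 2 ≤ n)
    (hτ : ∀ S : Finset V, S.card = 3 → HasPendantTrees H (↑S) ℓ)
    (u : Fin n) (a b c : V) (hab : a ≠ b) (hac : a ≠ c) (hbc : b ≠ c) :
    HasPendantTrees (pathGraph n □ H) {(u, a), (u, b), (u, c)} (ℓ + 1) := by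
  classical
  have : Nontrivial (Fin n) := Fin.nontrivial_iff_two_le.mpr hn
  obtain ⟨u', huu'⟩ := (pathGraph_preconnected n).exists_adj_of_nontrivial u
  have hS := hτ {a, b, c} (Finset.card_eq_three.mpr ⟨a, b, c, hab, hac, hbc, rfl⟩)
  simpa [Set.image_insert_eq] using hS.boxProd_succ hH huu'

theorem stmt6 {V : Type*} [Fintype V] (H : SimpleGraph V) (hH : H.Connected) (n ℓ : ℕ)
    (hn : 2 ≤ n)
    (hτ : ∀ S : Finset V, S.card = 3 → HasPendantTrees H (↑S) ℓ)
    (u : Fin n) (a b c : V) (hab : a ≠ b) (hac : a ≠ c) (hbc : b ≠ c) :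
    HasPendantTrees (pathGraph n □ H) {(u, a), (u, b), (u, c)} (ℓ + 1) :=
  stmt6_general H hH n ℓ hn hτ u a b c hab hac hbc
end

section
/- For k ≥ 3 and complete graphs K_{m_1}, …, K_{m_n} with each m_i ≥ k, the pendant tree k-connectivity of the n-dimensional generalized hypercube satisfies τ_k(K_{m_1} □ K_{m_2} □ ⋯ □ K_{m_n}) ≤ (∑_{i=1}^n m_i) − n − k + 2. -/
open SimpleGraph

/-- The box (Cartesian) product of a family of graphs. -/
def piBoxProd {n : ℕ} {α : Fin n → Type*} (G : ∀ i, SimpleGraph (α i)) :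
    SimpleGraph (∀ i, α i) where
  Adj x y := ∃ j, (G j).Adj (x j) (y j) ∧ ∀ i, i ≠ j → x i = y i
  symm := by
    constructor
    rintro x y ⟨j, hadj, h⟩
    exact ⟨j, hadj.symm, fun i hi => (h i hi).symm⟩
  loopless := by
    constructor
    rintro x ⟨j, hadj, -⟩
    exact (G j).irrefl hadj

/-!
Let `S` be a `k`-clique inside one `K_{m_i}`-fibre and `v ∈ S`. In each pendant `S`-Steiner tree
`v` is a leaf, and its unique neighbour there lies outside `S`: otherwise that tree would be a
single edge, yet it contains all of `S` and `|S| ≥ 3`. Edge-disjointness makes these neighbours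
distinct, so `v` has at least `ℓ` neighbours outside `S` besides its `k - 1` neighbours in `S`,
whence `ℓ + k - 1 ≤ deg v = ∑ mᵢ - n`.
-/

namespace SimpleGraph

variable {V : Type*} {G : SimpleGraph V}

theorem Walk.mem_of_adj_mem {s : Set V} (hs : ∀ ⦃a b⦄, G.Adj a b → a ∈ s → b ∈ s) :
    ∀ {x y : V}, G.Walk x y → x ∈ s → y ∈ s
  | _, _, .nil, hx => hx
  | _, _, .cons h p, hx => p.mem_of_adj_mem hs (hs h hx)

theorem Subgraph.verts_subset_pair_of_neighborSet_subset {T : G.Subgraph} (hT : T.coe.Connected)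
    {v u : V} (hvT : v ∈ T.verts) (hv : T.neighborSet v ⊆ {u}) (hu : T.neighborSet u ⊆ {v}) :
    T.verts ⊆ {v, u} := by
  intro w hwT
  obtain ⟨p⟩ := hT.preconnected ⟨v, hvT⟩ ⟨w, hwT⟩
  refine p.mem_of_adj_mem (s := {x | x.1 ∈ ({v, u} : Set V)}) ?_ (by simp)
  rintro ⟨a, ha⟩ ⟨b, hb⟩ hab (rfl | rfl : a = v ∨ a = u)
  · exact .inr (hv hab)
  · exact .inl (hu hab)

theorem ncard_neighborSet_top [Finite V] (v : V) :
    ((⊤ : SimpleGraph V).neighborSet v).ncard = Nat.card V - 1 := by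
  rw [neighborSet_top, Set.ncard_compl, Set.ncard_singleton]

end SimpleGraph

open SimpleGraph

section PendantTrees

variable {V : Type*} {G : SimpleGraph V} {S : Set V}

theorem IsPendantSteinerTree.subset_pair_of_adj {T : G.Subgraph} (hT : IsPendantSteinerTree G S T)
    {v u : V} (hv : v ∈ S) (hu : u ∈ S) (hvu : T.Adj v u) : S ⊆ {v, u} := by
  have neighborSet_subset {a b : V} (ha : a ∈ S) (hab : T.Adj a b) : T.neighborSet a ⊆ {b} := by
    obtain ⟨c, hc⟩ := Set.ncard_eq_one.mp (hT.2.2 a ha)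
    have hb : b ∈ T.neighborSet a := hab
    rw [hc, Set.mem_singleton_iff] at hb
    rw [hc, hb]
  exact hT.2.1.trans <| T.verts_subset_pair_of_neighborSet_subset hT.1.connected (hT.2.1 hv)
    (neighborSet_subset hv hvu) (neighborSet_subset hu hvu.symm)

theorem HasPendantTrees.le_ncard_neighborSet_sdiff [Finite V] {ℓ : ℕ} (h : HasPendantTrees G S ℓ)
    {v : V} (hv : v ∈ S) (hS : 2 < S.ncard) : ℓ ≤ (G.neighborSet v \ S).ncard := by
  obtain ⟨T, hT, hdisj⟩ := h
  choose u hu using fun i => Set.ncard_eq_one.mp ((hT i).2.2 v hv)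
  have hadj (i : Fin ℓ) : (T i).Adj v (u i) := show u i ∈ (T i).neighborSet v by simp [hu i]
  have hinj : Function.Injective u := by
    intro i j hij
    by_contra hne
    have hedge : s(v, u i) ∈ (T i).edgeSet ∩ (T j).edgeSet :=
      Set.mem_inter (hadj i) (hij ▸ hadj j)
    simp [(hdisj i j hne).1] at hedge
  have hnotMem (i : Fin ℓ) : u i ∉ S := fun hui => by
    have hsub := Set.ncard_le_ncard ((hT i).subset_pair_of_adj hv hui (hadj i))
    have hpair : ({v, u i} : Set V).ncard ≤ 2 := (Set.ncard_insert_le v {u i}).trans (by simp)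
    omega
  calc ℓ = (Set.range u).ncard := by simp [Set.ncard_range_of_injective hinj]
    _ ≤ _ := Set.ncard_le_ncard <| Set.range_subset_iff.2 fun i =>
        Set.mem_sdiff_of_mem ((T i).adj_sub (hadj i)) (hnotMem i)

theorem HasPendantTrees.add_ncard_sub_one_le_ncard_neighborSet [Finite V] {ℓ : ℕ}
    (h : HasPendantTrees G S ℓ) (hclique : G.IsClique S) {v : V} (hv : v ∈ S)
    (hS : 2 < S.ncard) : ℓ + (S.ncard - 1) ≤ (G.neighborSet v).ncard := by
  have houtside := h.le_ncard_neighborSet_sdiff hv hS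
  have hinside : S \ {v} ⊆ G.neighborSet v := fun w ⟨hw, hwv⟩ => hclique hv hw (Ne.symm hwv)
  calc ℓ + (S.ncard - 1) ≤ (G.neighborSet v \ S).ncard + (S \ {v}).ncard := by
        rw [Set.ncard_sdiff_singleton_of_mem hv]; omega
    _ = (G.neighborSet v \ S ∪ S \ {v}).ncard :=
        (Set.ncard_union_eq (Set.disjoint_sdiff_left.mono_right Set.sdiff_subset)).symm
    _ ≤ _ := Set.ncard_le_ncard (Set.union_subset Set.sdiff_subset hinside)

end PendantTrees

section BoxProduct

variable {n : ℕ} {α : Fin n → Type*} {G : ∀ i, SimpleGraph (α i)}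

theorem piBoxProd_ncard_neighborSet_le [∀ i, Finite (α i)] (v : ∀ i, α i) :
    ((piBoxProd G).neighborSet v).ncard ≤ ∑ i, ((G i).neighborSet (v i)).ncard := by
  let f : (Σ j, (G j).neighborSet (v j)) → ∀ i, α i := fun p => Function.update v p.1 p.2
  have hsub : (piBoxProd G).neighborSet v ⊆ Set.range f := by
    rintro y ⟨j, hj, hothers⟩
    refine ⟨⟨j, y j, hj⟩, funext fun i => ?_⟩
    by_cases hij : i = j
    · subst hij; simp [f]
    · simp [f, Function.update_of_ne hij, hothers i hij]
  calc _ ≤ (Set.range f).ncard := Set.ncard_le_ncard hsub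
    _ ≤ Nat.card (Σ j, (G j).neighborSet (v j)) := Finite.card_range_le f
    _ = _ := by simp [Nat.card_sigma, Nat.card_coe_set_eq]

theorem piBoxProd_isNClique_map_update {k : ℕ} (x : ∀ i, α i) {j : Fin n} {t : Finset (α j)}
    (ht : (G j).IsNClique k t) :
    (piBoxProd G).IsNClique k (t.map ⟨Function.update x j, Function.update_injective x j⟩) := by
  refine ⟨?_, by simp [ht.card_eq]⟩
  rintro _ ha _ hb hne
  simp only [Finset.coe_map, Function.Embedding.coeFn_mk, Set.mem_image, Finset.mem_coe] at ha hb
  obtain ⟨a, ha, rfl⟩ := ha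
  obtain ⟨b, hb, rfl⟩ := hb
  refine ⟨j, by simpa using ht.isClique ha hb (by rintro rfl; exact hne rfl), fun i hij => ?_⟩
  simp [Function.update_of_ne hij]

end BoxProduct

theorem stmt12 (n k : ℕ) (hn : 1 ≤ n) (hk : 3 ≤ k) (m : Fin n → ℕ) (hm : ∀ i, k ≤ m i) :
    pendantConn (piBoxProd fun i => (⊤ : SimpleGraph (Fin (m i)))) k ≤
      (∑ i, m i) - n - k + 2 := by
  refine csSup_le' fun ℓ hℓ => ?_
  let i₀ : Fin n := ⟨0, hn⟩
  let x : ∀ i, Fin (m i) := fun i => ⟨0, by have := hm i; omega⟩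
  obtain ⟨t, -, ht⟩ := Finset.exists_subset_card_eq
    (s := (Finset.univ : Finset (Fin (m i₀)))) (n := k) (by simpa using hm i₀)
  have hS := piBoxProd_isNClique_map_update x (G := fun i => (⊤ : SimpleGraph (Fin (m i))))
    (⟨IsClique.top _, ht⟩ : (⊤ : SimpleGraph (Fin (m i₀))).IsNClique k t)
  obtain ⟨v, hv⟩ := Finset.card_pos.mp (by rw [hS.card_eq]; omega)
  have hlower := (hℓ _ hS.card_eq).add_ncard_sub_one_le_ncard_neighborSet hS.isClique hv
    (by rw [Set.ncard_coe_finset, hS.card_eq]; omega)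
  have hupper := piBoxProd_ncard_neighborSet_le (G := fun i => (⊤ : SimpleGraph (Fin (m i)))) v
  simp only [ncard_neighborSet_top, Nat.card_fin] at hupper
  rw [Set.ncard_coe_finset, hS.card_eq] at hlower
  have hsum := Finset.sum_tsub_distrib Finset.univ (f := m) (g := fun _ => 1)
    fun i _ => by have := hm i; omega
  simp only [Finset.sum_const, Finset.card_univ, Fintype.card_fin, smul_eq_mul, mul_one] at hsum
  omega
end

section
/- A graph G is k-connected if and only if G has at least k+1 vertices and for every vertex x and every vertex set U with |U| ≥ k and x ∉ U, there exists an (x, U)-fan of size k. -/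
open SimpleGraph

/-- An `(x, U)`-fan of size `k`: `k` paths from `x` to `U`, any two sharing only `x`,
each meeting `U` only in its endpoint. -/
def IsFan {V : Type*} (G : SimpleGraph V) (x : V) (U : Set V) (k : ℕ)
    (t : Fin k → V) (P : ∀ i, G.Walk x (t i)) : Prop :=
  (∀ i, t i ∈ U) ∧ (∀ i, (P i).IsPath) ∧
  (∀ i, ∀ v ∈ (P i).support, v ∈ U → v = t i) ∧
  (∀ i j, i ≠ j → ∀ v, v ∈ (P i).support → v ∈ (P j).support → v = x)

/-
Forward direction: apply Menger's theorem in `G` with the edges at `x` removed, between the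
neighbourhood of `x` and `U`. A separator `T` of fewer than `k` vertices is impossible, since
`G - (T - x)` is connected and a path in it from `x` into `U \ T` leaves `x` through a neighbour
and then avoids `x` and `T`. Prefixing `x` to the `k` disjoint paths gives the fan.

Menger's theorem is proved by induction on the edges (Göring's argument). If deleting an edge
`uv` leaves some `A`–`B` separator `S` with `|S| < k`, then `S + u` and `S + v` separate in `G`,
so `|S| = k - 1`, and every `A`–`(S + u)` or `(S + v)`–`B` separator in `G - uv` separates `A`
from `B` in `G`. By induction there are `k` disjoint `A`–`(S + u)` paths and `k` disjoint
`(S + v)`–`B` paths in `G - uv`; since `S` separates, paths of the two families meet only at a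
common endpoint in `S`, and they are glued there or along `uv`.

Backward direction: given `|W| < k` and `a, b ∉ W`, take a `k`-set `U ⊇ W + b` avoiding `a`. The
`k` paths of an `(a, U)`-fan end at distinct vertices of `U`, so one of them ends at `b`, and it
meets `U`, hence `W`, only there.
-/

theorem Function.Injective.exists_apply_eq_of_card_le {α : Type*} {k : ℕ} {f : Fin k → α}
    (hf : Function.Injective f) {T : Finset α} (hT : ∀ i, f i ∈ T) (hcard : T.card ≤ k)
    {y : α} (hy : y ∈ T) : ∃ i, f i = y := by
  obtain ⟨i, -, hi⟩ := Finset.surjOn_of_injOn_of_card_le f (s := Finset.univ)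
    (fun i _ => hT i) hf.injOn (by simpa using hcard) hy
  exact ⟨i, hi⟩

namespace SimpleGraph

open Function

variable {V : Type*} {G H : SimpleGraph V} {A B S T X Y : Set V} {a b u v x : V} {k : ℕ}

theorem reachable_induce_iff {s : Set V} (ha : a ∈ s) (hb : b ∈ s) :
    (G.induce s).Reachable ⟨a, ha⟩ ⟨b, hb⟩ ↔ ∃ p : G.Walk a b, ∀ z ∈ p.support, z ∈ s := by
  refine ⟨fun ⟨p⟩ => ?_, fun ⟨p, hp⟩ => ⟨p.induce s hp⟩⟩
  have hp : ∀ z ∈ (p.map (Embedding.induce s).toHom).support, z ∈ s := by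
    simp only [Walk.support_map, List.mem_map]
    rintro _ ⟨z, -, rfl⟩
    exact z.2
  exact ⟨_, hp⟩

namespace Walk

theorem not_mem_support_of_forall_not_adj (hx : ∀ y, ¬ G.Adj x y) (p : G.Walk a b)
    (ha : a ≠ x) : x ∉ p.support := by
  induction p with
  | nil => simpa using ha.symm
  | @cons a c _ h p ih =>
    simp only [support_cons, List.mem_cons, not_or]
    exact ⟨ha.symm, ih (by rintro rfl; exact hx a h.symm)⟩

theorem exists_prefix_to_first_mem (p : G.Walk a b) (h : ∃ z ∈ p.support, z ∈ X) :
    ∃ z ∈ X, ∃ q : G.Walk a z, q.support ⊆ p.support ∧ ∀ w ∈ q.support, w ∈ X → w = z := by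
  induction p with
  | nil =>
    obtain ⟨z, hz, hzX⟩ := h
    rw [support_nil, List.mem_singleton] at hz
    subst hz
    exact ⟨_, hzX, nil, by simp, by simp⟩
  | @cons a _ _ hadj p ih =>
    by_cases ha : a ∈ X
    · exact ⟨a, ha, nil, by simp, by simp⟩
    obtain ⟨z, hz, hzX⟩ := h
    rw [support_cons, List.mem_cons] at hz
    obtain ⟨z, hzX, q, hqp, hqX⟩ := ih ⟨z, hz.resolve_left (by rintro rfl; exact ha hzX), hzX⟩
    refine ⟨z, hzX, cons hadj q, List.cons_subset_cons _ hqp, fun w hw hwX => ?_⟩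
    rw [support_cons, List.mem_cons] at hw
    exact hw.elim (by rintro rfl; exact absurd hwX ha) (hqX w · hwX)

theorem edge_not_mem_edges {z : V} {q : G.Walk a b} (hq : ∀ w ∈ q.support, w ∈ X → w = z)
    (hu : u ∈ X) (hv : v ∈ X) (huv : u ≠ v) : s(u, v) ∉ q.edges := fun he =>
  huv <| (hq u (q.fst_mem_support_of_mem_edges he) hu).trans
    (hq v (q.snd_mem_support_of_mem_edges he) hv).symm

end Walk

def Separates (G : SimpleGraph V) (A B S : Set V) : Prop :=
  ∀ ⦃a⦄, a ∈ A → ∀ ⦃b⦄, b ∈ B → ∀ p : G.Walk a b, ∃ s ∈ p.support, s ∈ S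

theorem Separates.symm (h : G.Separates A B S) : G.Separates B A S := fun _ hb _ ha p => by
  simpa using h ha hb p.reverse

theorem separates_inter_of_edgeSet_eq_empty (hE : G.edgeSet = ∅) :
    G.Separates A B (A ∩ B) := by
  rw [edgeSet_eq_empty] at hE
  subst hE
  rintro a ha b hb (_ | ⟨h, _⟩)
  · exact ⟨a, by simp, ha, hb⟩
  · exact h.elim

structure ABWalk (G : SimpleGraph V) (A B : Set V) where
  src : V
  tgt : V
  src_mem : src ∈ A
  tgt_mem : tgt ∈ B
  walk : G.Walk src tgt

namespace ABWalk

abbrev support (P : G.ABWalk A B) : List V := P.walk.support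

def IsABPath (P : G.ABWalk A B) : Prop :=
  P.walk.IsPath ∧ (∀ w ∈ P.support, w ∈ A → w = P.src) ∧ ∀ w ∈ P.support, w ∈ B → w = P.tgt

def mapLe (h : G ≤ H) (P : G.ABWalk A B) : H.ABWalk A B :=
  ⟨P.src, P.tgt, P.src_mem, P.tgt_mem, P.walk.mapLe h⟩

@[simp]
theorem support_mapLe (h : G ≤ H) (P : G.ABWalk A B) : (P.mapLe h).support = P.support :=
  Walk.support_mapLe_eq_support ..

theorem exists_isABPath (P : G.ABWalk A B) :
    ∃ Q : G.ABWalk A B, Q.IsABPath ∧ Q.support ⊆ P.support := by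
  classical
  obtain ⟨b, hb, q₁, hq₁, hq₁B⟩ :=
    P.walk.exists_prefix_to_first_mem ⟨P.tgt, P.walk.end_mem_support, P.tgt_mem⟩
  obtain ⟨a, ha, q₂, hq₂, hq₂A⟩ :=
    q₁.reverse.exists_prefix_to_first_mem ⟨P.src, by simp, P.src_mem⟩
  have hsub : q₂.reverse.bypass.support ⊆ q₂.support :=
    List.Subset.trans q₂.reverse.support_bypass_subset_support (by simp)
  have hq₂₁ : q₂.support ⊆ q₁.support := List.Subset.trans hq₂ (by simp)
  refine ⟨⟨a, b, ha, hb, q₂.reverse.bypass⟩, ⟨Walk.bypass_isPath _, fun w hw hwA => ?_,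
    fun w hw hwB => ?_⟩, List.Subset.trans (List.Subset.trans hsub hq₂₁) hq₁⟩
  · exact hq₂A w (hsub hw) hwA
  · exact hq₁B w (hq₂₁ (hsub hw)) hwB

theorem exists_isABPath_family {ι : Type*}
    (h : ∃ P : ι → G.ABWalk A B, Pairwise (List.Disjoint on fun i => (P i).support)) :
    ∃ Q : ι → G.ABWalk A B, (∀ i, (Q i).IsABPath) ∧
      Pairwise (List.Disjoint on fun i => (Q i).support) := by
  obtain ⟨P, hP⟩ := h
  choose Q hQ hsub using fun i => (P i).exists_isABPath
  exact ⟨Q, hQ, fun i j hij w hi hj => hP hij (hsub i hi) (hsub j hj)⟩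

theorem src_injective {ι : Type*} {P : ι → G.ABWalk A B}
    (hP : Pairwise (List.Disjoint on fun i => (P i).support)) :
    Function.Injective fun i => (P i).src := fun i j h => by
  have h : (P i).src = (P j).src := h
  by_contra hij
  exact hP hij (P i).walk.start_mem_support (h ▸ (P j).walk.start_mem_support)

theorem tgt_injective {ι : Type*} {P : ι → G.ABWalk A B}
    (hP : Pairwise (List.Disjoint on fun i => (P i).support)) :
    Function.Injective fun i => (P i).tgt := fun i j h => by
  have h : (P i).tgt = (P j).tgt := h
  by_contra hij
  exact hP hij (P i).walk.end_mem_support (h ▸ (P j).walk.end_mem_support)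

theorem mem_separator_of_mem_support [DecidableEq V] (hS : G.Separates A B S) (hSX : S ⊆ X)
    (hSY : S ⊆ Y) {P : G.ABWalk A X} {Q : G.ABWalk Y B} (hP : P.IsABPath) (hQ : Q.IsABPath)
    {w : V} (hwP : w ∈ P.support) (hwQ : w ∈ Q.support) : w ∈ S ∧ w = P.tgt ∧ w = Q.src := by
  have hwQ' : w ∈ Q.walk.reverse.support := by simpa using hwQ
  obtain ⟨s, hs, hsS⟩ := hS P.src_mem Q.tgt_mem
    ((P.walk.takeUntil w hwP).append (Q.walk.reverse.takeUntil w hwQ').reverse)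
  obtain rfl : w = s := by
    rw [Walk.mem_support_append_iff, Walk.support_reverse, List.mem_reverse] at hs
    by_contra hne
    rcases hs with hs | hs
    · have hsP : s = P.tgt :=
        hP.2.2 s (P.walk.support_takeUntil_subset_support hwP hs) (hSX hsS)
      exact Walk.endpoint_notMem_support_takeUntil hP.1 hwP (hsP ▸ Ne.symm hne) (hsP ▸ hs)
    · have hsQ : s = Q.src :=
        hQ.2.1 s (by simpa using Q.walk.reverse.support_takeUntil_subset_support hwQ' hs)
          (hSY hsS)
      exact Walk.endpoint_notMem_support_takeUntil ((Walk.isPath_reverse_iff _).2 hQ.1) hwQ'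
        (hsQ ▸ Ne.symm hne) (hsQ ▸ hs)
  exact ⟨hsS, hP.2.2 w hwP (hSX hsS), hQ.2.1 w hwQ (hSY hsS)⟩

theorem exists_append (hle : H ≤ G) (P : H.ABWalk A X) (Q : H.ABWalk Y B)
    (h : P.tgt = Q.src ∨ G.Adj P.tgt Q.src) :
    ∃ R : G.ABWalk A B, ∀ w ∈ R.support, w ∈ P.support ∨ w ∈ Q.support := by
  obtain ⟨c, hc⟩ : ∃ c : G.Walk P.tgt Q.src, ∀ w ∈ c.support, w = P.tgt ∨ w = Q.src := by
    rcases h with h | h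
    · exact ⟨Walk.nil.copy rfl h, by simp⟩
    · exact ⟨Walk.cons h Walk.nil, by simp⟩
  refine ⟨⟨P.src, Q.tgt, P.src_mem, Q.tgt_mem,
    (P.walk.mapLe hle).append (c.append (Q.walk.mapLe hle))⟩, fun w hw => ?_⟩
  simp only [support, Walk.mem_support_append_iff, Walk.support_mapLe_eq_support] at hw
  rcases hw with hw | hw | hw
  · exact .inl hw
  · exact (hc w hw).imp (fun h : w = P.tgt => h ▸ P.walk.end_mem_support)
      (fun h : w = Q.src => h ▸ Q.walk.start_mem_support)
  · exact .inr hw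

end ABWalk

section DeleteEdge

variable [DecidableEq V] {e : Sym2 V}

theorem Separates.insert_of_deleteEdges (he : e = s(u, v))
    (hS : (G.deleteEdges {e}).Separates A B S) : G.Separates A B (insert u S) := by
  subst he
  intro a ha b hb p
  by_cases hp : s(u, v) ∈ p.edges
  · exact ⟨u, p.fst_mem_support_of_mem_edges hp, Set.mem_insert _ _⟩
  · obtain ⟨s, hs, hsS⟩ := hS ha hb (p.toDeleteEdge _ hp)
    exact ⟨s, by simpa using hs, Set.mem_insert_of_mem _ hsS⟩

theorem Separates.of_deleteEdges_insert (he : e = s(u, v)) (huv : u ≠ v) (hvS : v ∉ S)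
    (hS : (G.deleteEdges {e}).Separates A B S) {b₀ : V} (hb₀ : b₀ ∈ B)
    (W : (G.deleteEdges {e}).Walk v b₀) (hW : ∀ s ∈ W.support, s ∉ S)
    (hT : (G.deleteEdges {e}).Separates A (insert u S) T) : G.Separates A B T := by
  subst he
  intro a ha b hb p
  let X := insert u (insert v S)
  -- The prefix of `p` up to its first vertex in `X` avoids `uv`; if that vertex is `v`, then `W`
  -- continues the prefix to an `A`–`B` walk of `G - uv` avoiding `S`.
  by_cases hit : ∃ z ∈ p.support, z ∈ X
  · obtain ⟨z, hzX, q, hqp, hqX⟩ := p.exists_prefix_to_first_mem hit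
    have hq : s(u, v) ∉ q.edges :=
      Walk.edge_not_mem_edges hqX (by simp [X]) (by simp [X]) huv
    by_cases hz : z ∈ insert u S
    · obtain ⟨t, ht, htT⟩ := hT ha hz (q.toDeleteEdge _ hq)
      exact ⟨t, hqp (by simpa using ht), htT⟩
    obtain rfl : z = v := by simp only [X, Set.mem_insert_iff] at hzX hz; tauto
    obtain ⟨s, hs, hsS⟩ := hS ha hb₀ ((q.toDeleteEdge _ hq).append W)
    rw [Walk.mem_support_append_iff] at hs
    refine hs.elim (fun hs => ?_) (fun hs => (hW s hs hsS).elim)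
    exact (hvS (hqX s (by simpa using hs) (by simp [X, hsS]) ▸ hsS)).elim
  · push Not at hit
    have hp : s(u, v) ∉ p.edges :=
      fun h => hit u (p.fst_mem_support_of_mem_edges h) (by simp [X])
    obtain ⟨s, hs, hsS⟩ := hS ha hb (p.toDeleteEdge _ hp)
    exact (hit s (by simpa using hs) (by simp [X, hsS])).elim

theorem exists_walks_of_not_separates (hS : (G.deleteEdges {e}).Separates A B S)
    (hG : ¬ G.Separates A B S) :
    ∃ u v, e = s(u, v) ∧ ∃ a ∈ A, ∃ b ∈ B, ∃ (W₁ : (G.deleteEdges {e}).Walk a u)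
      (W₂ : (G.deleteEdges {e}).Walk v b),
      (∀ s ∈ W₁.support, s ∉ S) ∧ ∀ s ∈ W₂.support, s ∉ S := by
  simp only [Separates, not_forall, not_exists, not_and] at hG
  obtain ⟨a, ha, b, hb, p, hpS⟩ := hG
  induction e using Sym2.ind with | _ x y => ?_
  have he : s(x, y) ∈ p.edges := by
    by_contra he
    obtain ⟨s, hs, hsS⟩ := hS ha hb (p.toDeleteEdge _ he)
    exact hpS s (by simpa using hs) hsS
  have hxy : x ≠ y := (p.adj_of_mem_edges he).ne
  let X : Set V := {x, y}
  obtain ⟨u, huX, q₁, hq₁p, hq₁X⟩ :=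
    p.exists_prefix_to_first_mem (X := X) ⟨x, p.fst_mem_support_of_mem_edges he, by simp [X]⟩
  obtain ⟨v, hvX, q₂, hq₂p, hq₂X⟩ :=
    p.reverse.exists_prefix_to_first_mem (X := X)
      ⟨x, by simpa using p.fst_mem_support_of_mem_edges he, by simp [X]⟩
  have hq₁ : s(x, y) ∉ q₁.edges := Walk.edge_not_mem_edges hq₁X (by simp [X]) (by simp [X]) hxy
  have hq₂ : s(x, y) ∉ q₂.edges := Walk.edge_not_mem_edges hq₂X (by simp [X]) (by simp [X]) hxy
  have hq₁S : ∀ s ∈ q₁.support, s ∉ S := fun s hs => hpS s (hq₁p hs)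
  have hq₂S : ∀ s ∈ q₂.support, s ∉ S := fun s hs => hpS s (by simpa using hq₂p hs)
  -- Otherwise `p` could be shortcut at `u`, avoiding both `xy` and `S`.
  have huv : u ≠ v := by
    rintro rfl
    obtain ⟨s, hs, hsS⟩ :=
      hS ha hb ((q₁.toDeleteEdge _ hq₁).append (q₂.toDeleteEdge _ hq₂).reverse)
    simp only [Walk.mem_support_append_iff, Walk.support_reverse, List.mem_reverse] at hs
    rcases hs with hs | hs
    · exact hq₁S s (by simpa using hs) hsS
    · exact hq₂S s (by simpa using hs) hsS
  refine ⟨u, v, ?_, a, ha, b, hb, q₁.toDeleteEdge _ hq₁, (q₂.toDeleteEdge _ hq₂).reverse,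
    by simpa using hq₁S, by simpa using hq₂S⟩
  simp only [X, Set.mem_insert_iff, Set.mem_singleton_iff] at huX hvX
  rcases huX with rfl | rfl <;> rcases hvX with rfl | rfl <;> simp_all [Sym2.eq_swap]

end DeleteEdge

theorem exists_abWalks_of_edgeSet_eq_empty [Finite V]
    (hk : ∀ S : Finset V, G.Separates A B S → k ≤ S.card) (hE : G.edgeSet = ∅) :
    ∃ P : Fin k → G.ABWalk A B, Pairwise (List.Disjoint on fun i => (P i).support) := by
  classical
  have := Fintype.ofFinite V
  have hAB := hk (A ∩ B).toFinset (by simpa using separates_inter_of_edgeSet_eq_empty hE)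
  obtain ⟨f⟩ := Function.Embedding.nonempty_of_card_le (α := Fin k) (β := (A ∩ B).toFinset)
    (by rwa [Fintype.card_coe, Fintype.card_fin])
  have hf : ∀ i, (f i : V) ∈ A ∩ B := fun i => Set.mem_toFinset.1 (f i).2
  refine ⟨fun i => ⟨f i, f i, (hf i).1, (hf i).2, Walk.nil⟩, fun i j hij w hi hj => ?_⟩
  simp only [ABWalk.support, Walk.support_nil, List.mem_singleton] at hi hj
  exact hij (f.injective (Subtype.ext (hi.symm.trans hj)))

theorem exists_abWalks_of_abPaths_via_edge [DecidableEq V] (hle : H ≤ G) (huv : G.Adj u v)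
    {S : Finset V} (huS : u ∉ S) (hvS : v ∉ S) (hcard : (insert v S).card ≤ k)
    (hS : H.Separates A B S)
    {P : Fin k → H.ABWalk A ↑(insert u S)} (hP : ∀ i, (P i).IsABPath)
    (hPd : Pairwise (List.Disjoint on fun i => (P i).support))
    {Q : Fin k → H.ABWalk ↑(insert v S) B} (hQ : ∀ i, (Q i).IsABPath)
    (hQd : Pairwise (List.Disjoint on fun i => (Q i).support)) :
    ∃ R : Fin k → G.ABWalk A B, Pairwise (List.Disjoint on fun i => (R i).support) := by
  -- `Equiv.swap u v` sends the end of each `P`-path to the start of the `Q`-path it is glued to.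
  have hswap : ∀ i, Equiv.swap u v (P i).tgt ∈ insert v S := fun i => by
    have := (P i).tgt_mem
    simp only [Finset.coe_insert, Set.mem_insert_iff, Finset.mem_coe] at this
    rcases this with h | h
    · simp [h]
    · rw [Equiv.swap_apply_of_ne_of_ne (ne_of_mem_of_not_mem h huS)
        (ne_of_mem_of_not_mem h hvS)]
      exact Finset.mem_insert_of_mem h
  choose σ hσ using fun i => (ABWalk.src_injective hQd).exists_apply_eq_of_card_le
    (fun j => (Q j).src_mem) hcard (hswap i)
  have hσinj : Injective σ := fun i j h => ABWalk.tgt_injective hPd <|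
    (Equiv.swap u v).injective (by simp only [← hσ, h])
  have hglue : ∀ i, (P i).tgt = (Q (σ i)).src ∨ G.Adj (P i).tgt (Q (σ i)).src := fun i => by
    rw [hσ i]
    by_cases h : (P i).tgt = u
    · simp [h, huv]
    · left
      have := (P i).tgt_mem
      simp only [Finset.coe_insert, Set.mem_insert_iff, Finset.mem_coe, h, false_or] at this
      rw [Equiv.swap_apply_of_ne_of_ne h (ne_of_mem_of_not_mem this hvS)]
  choose R hR using fun i => ABWalk.exists_append hle (P i) (Q (σ i)) (hglue i)
  have hPQ : ∀ i j, i ≠ j → ∀ w ∈ (P i).support, w ∉ (Q (σ j)).support := by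
    intro i j hij w hwP hwQ
    obtain ⟨hwS, rfl, hwQj⟩ := ABWalk.mem_separator_of_mem_support hS
      (by simp [Set.subset_insert]) (by simp [Set.subset_insert]) (hP i) (hQ (σ j)) hwP hwQ
    have : (Q (σ i)).src = (Q (σ j)).src := by
      rw [hσ i, Equiv.swap_apply_of_ne_of_ne (ne_of_mem_of_not_mem hwS huS)
        (ne_of_mem_of_not_mem hwS hvS), hwQj]
    exact hij (hσinj (ABWalk.src_injective hQd this))
  refine ⟨R, fun i j hij w hwi hwj => ?_⟩
  rcases hR i w hwi with hi | hi <;> rcases hR j w hwj with hj | hj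
  · exact hPd hij hi hj
  · exact hPQ i j hij w hi hj
  · exact hPQ j i hij.symm w hj hi
  · exact hQd (hσinj.ne hij) hi hj

theorem exists_pairwise_disjoint_abPaths [Finite V] (G : SimpleGraph V) (A B : Set V)
    (hk : ∀ S : Finset V, G.Separates A B S → k ≤ S.card) :
    ∃ P : Fin k → G.ABWalk A B, (∀ i, (P i).IsABPath) ∧
      Pairwise (List.Disjoint on fun i => (P i).support) := by
  classical
  induction G using WellFoundedLT.induction generalizing A B with | _ G ih => ?_
  apply ABWalk.exists_isABPath_family
  rcases G.edgeSet.eq_empty_or_nonempty with hE | ⟨e, he⟩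
  · exact exists_abWalks_of_edgeSet_eq_empty hk hE
  have hlt : G.deleteEdges {e} < G :=
    (G.deleteEdges_le _).lt_of_ne fun h => by rw [← h] at he; simp at he
  by_cases hk' : ∀ S : Finset V, (G.deleteEdges {e}).Separates A B S → k ≤ S.card
  · obtain ⟨P, -, hP⟩ := ih _ hlt A B hk'
    exact ⟨fun i => (P i).mapLe (G.deleteEdges_le _), by simpa using hP⟩
  push Not at hk'
  obtain ⟨S, hS, hSk⟩ := hk'
  obtain ⟨u, v, rfl, a, ha, b, hb, W₁, W₂, hW₁, hW₂⟩ :=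
    exists_walks_of_not_separates hS fun h => (hk S h).not_gt hSk
  have hadj : G.Adj u v := he
  have hvu : s(u, v) = s(v, u) := Sym2.eq_swap
  have huS : u ∉ S := fun h =>
    (hk (insert u S) (by simpa using hS.insert_of_deleteEdges rfl)).not_gt
      (by rwa [Finset.insert_eq_of_mem h])
  have hvS : v ∉ S := fun h =>
    (hk (insert v S) (by simpa using hS.insert_of_deleteEdges hvu)).not_gt
      (by rwa [Finset.insert_eq_of_mem h])
  obtain ⟨P, hP, hPd⟩ := ih _ hlt A ↑(insert u S) fun T hT => hk T <|
    hS.of_deleteEdges_insert rfl hadj.ne hvS hb W₂ hW₂ (by simpa using hT)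
  obtain ⟨Q, hQ, hQd⟩ := ih _ hlt ↑(insert v S) B fun T hT => hk T <| Separates.symm <|
    hS.symm.of_deleteEdges_insert hvu hadj.ne.symm huS ha W₁.reverse (by simpa using hW₁)
      (by simpa using hT.symm)
  exact exists_abWalks_of_abPaths_via_edge (G.deleteEdges_le _) hadj huS hvS
    ((Finset.card_insert_le _ _).trans hSk) hS hP hPd hQ hQd

end SimpleGraph

section Fan

variable {V : Type*} {G : SimpleGraph V} {k : ℕ} {x : V} {U : Finset V}

theorem IsFan.injective {t : Fin k → V} {P : ∀ i, G.Walk x (t i)} (h : IsFan G x U k t P)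
    (hx : x ∉ U) : Function.Injective t := fun i j hij => by
  by_contra hne
  have hti : t i = x :=
    h.2.2.2 i j hne (t i) (P i).end_mem_support (by rw [hij]; exact (P j).end_mem_support)
  exact hx (hti ▸ h.1 i)

variable [Fintype V]

theorem IsKConnected.le_card_of_separates (hG : IsKConnected G k) (hU : k ≤ U.card)
    (hx : x ∉ U) (T : Finset V) (hT : (G.deleteIncidenceSet x).Separates (G.neighborSet x) U T) :
    k ≤ T.card := by
  classical
  by_contra! hlt
  obtain ⟨u, huU, huT⟩ := Finset.exists_mem_notMem_of_card_lt_card (hlt.trans_le hU)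
  obtain ⟨p, hp⟩ := (reachable_induce_iff (by simp) (by simp [huT])).1 <|
    (hG.2 (T.erase x) ((T.card_erase_le).trans_lt hlt)).preconnected ⟨x, _⟩ ⟨u, _⟩
  obtain ⟨y, hxy, q, hq⟩ := p.bypass.exists_eq_cons_of_ne (ne_of_mem_of_not_mem huU hx).symm
  have hqx : x ∉ q.support := by
    have := p.bypass_isPath
    rw [hq, Walk.cons_isPath_iff] at this
    exact this.2
  let q' : (G.deleteIncidenceSet x).Walk y u :=
    q.toDeleteEdges _ fun e he hex => hqx (q.mem_support_of_mem_edges he hex.2)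
  obtain ⟨t, ht, htT⟩ := hT hxy huU q'
  have htq : t ∈ q.support := (Walk.support_transfer _ _) ▸ ht
  have htp : t ∈ p.support := p.support_bypass_subset_support (by simp [hq, htq])
  exact hp t htp (by simp [htT, ne_of_mem_of_not_mem htq hqx])

theorem IsKConnected.exists_fan (hG : IsKConnected G k) (hU : k ≤ U.card) (hx : x ∉ U) :
    ∃ (t : Fin k → V) (P : ∀ i, G.Walk x (t i)), IsFan G x U k t P := by
  obtain ⟨P, hP, hPd⟩ := exists_pairwise_disjoint_abPaths (G.deleteIncidenceSet x)
    (G.neighborSet x) U (hG.le_card_of_separates hU hx)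
  let R : ∀ i, G.Walk x (P i).tgt := fun i =>
    .cons ((G.mem_neighborSet _ _).1 (P i).src_mem) ((P i).walk.mapLe (G.deleteIncidenceSet_le x))
  have hR : ∀ i, (R i).support = x :: (P i).support := fun i => by simp [R]
  have hxP : ∀ i, x ∉ (P i).support := fun i =>
    Walk.not_mem_support_of_forall_not_adj (by simp [deleteIncidenceSet_adj]) _
      (G.ne_of_adj (P i).src_mem).symm
  refine ⟨fun i => (P i).tgt, R, fun i => (P i).tgt_mem, fun i => ?_, fun i w hw hwU => ?_,
    fun i j hij w hi hj => ?_⟩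
  · exact (Walk.cons_isPath_iff _ _).2 ⟨(hP i).1.mapLe _, by simpa using hxP i⟩
  · rw [hR, List.mem_cons] at hw
    exact hw.elim (fun h => (hx (h ▸ hwU)).elim) fun h => (hP i).2.2 w h hwU
  · rw [hR, List.mem_cons] at hi hj
    rcases hi with rfl | hi
    · rfl
    rcases hj with rfl | hj
    · rfl
    exact (hPd hij hi hj).elim

theorem exists_walk_of_forall_exists_fan (hcard : k + 1 ≤ Fintype.card V)
    (hfan : ∀ (x : V) (U : Finset V), k ≤ U.card → x ∉ U →
      ∃ (t : Fin k → V) (P : ∀ i, G.Walk x (t i)), IsFan G x U k t P)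
    {W : Finset V} (hW : W.card < k) {a b : V} (ha : a ∉ W) (hb : b ∉ W) (hab : a ≠ b) :
    ∃ p : G.Walk a b, ∀ z ∈ p.support, z ∉ W := by
  classical
  obtain ⟨U, hbWU, hUa, hUk⟩ := Finset.exists_subsuperset_card_eq (n := k)
    (show insert b W ⊆ Finset.univ.erase a by
      intro z hz
      simp only [Finset.mem_insert, Finset.mem_erase, Finset.mem_univ, and_true] at hz ⊢
      rintro rfl
      exact hz.elim hab ha)
    ((Finset.card_insert_le _ _).trans hW)
    (by rw [Finset.card_erase_of_mem (Finset.mem_univ _), Finset.card_univ]; omega)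
  have haU : a ∉ U := fun h => by simpa using hUa h
  obtain ⟨t, P, hP⟩ := hfan a U hUk.ge haU
  obtain ⟨i, rfl⟩ := (hP.injective haU).exists_apply_eq_of_card_le hP.1 hUk.le
    (hbWU (Finset.mem_insert_self _ _))
  exact ⟨P i, fun z hz hzW =>
    hb (hP.2.2.1 i z hz (hbWU (Finset.mem_insert_of_mem hzW)) ▸ hzW)⟩

theorem isKConnected_of_forall_exists_fan (hcard : k + 1 ≤ Fintype.card V)
    (hfan : ∀ (x : V) (U : Finset V), k ≤ U.card → x ∉ U →
      ∃ (t : Fin k → V) (P : ∀ i, G.Walk x (t i)), IsFan G x U k t P) :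
    IsKConnected G k := by
  refine ⟨hcard, fun W hW => ?_⟩
  obtain ⟨c, -, hc⟩ := Finset.exists_mem_notMem_of_card_lt_card (t := Finset.univ)
    (hW.trans (by rw [Finset.card_univ]; omega))
  have : Nonempty ↥(↑W : Set V)ᶜ := ⟨⟨c, hc⟩⟩
  refine ⟨fun ⟨a, ha⟩ ⟨b, hb⟩ => ?_⟩
  by_cases hab : a = b
  · subst hab
    rfl
  exact (reachable_induce_iff ha hb).2 (exists_walk_of_forall_exists_fan hcard hfan hW ha hb hab)

end Fan

theorem stmt15 {V : Type*} [Fintype V] (G : SimpleGraph V) (k : ℕ) :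
    IsKConnected G k ↔
      (k + 1 ≤ Fintype.card V ∧
        ∀ (x : V) (U : Finset V), k ≤ U.card → x ∉ U →
          ∃ (t : Fin k → V) (P : ∀ i, G.Walk x (t i)), IsFan G x (↑U) k t P) :=
  ⟨fun hG => ⟨hG.1, fun _ _ hU hx => hG.exists_fan hU hx⟩,
    fun ⟨hcard, hfan⟩ => isKConnected_of_forall_exists_fan hcard hfan⟩
end

section
/- Let G and H be connected graphs with δ(G) ≥ k+2 and τ₃(H) = ℓ, and let x, y, z be three distinct vertices lying in one H-fiber H(u₁) of G □ H; then there exist at least k + ℓ + 2 pairwise internally disjoint pendant {x,y,z}-Steiner trees in G □ H. -/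
open SimpleGraph

open Function in
section
section Helpers

variable {W A B : Type*}

private lemma head_ne_last {X : Type*} {a : X} {l : List X} (h : (a :: l).Nodup) (hl : l ≠ []) :
    (a :: l).getLast? ≠ some a := by
  rw [List.getLast?_eq_getLast (l := a :: l) (by simp)]
  intro heq
  have ha : (a :: l).getLast (by simp) = a := by injection heq
  have hmem : (a :: l).getLast (by simp) ∈ l := by
    rw [List.getLast_cons hl]
    exact List.getLast_mem hl
  rw [ha] at hmem
  exact (List.nodup_cons.mp h).1 hmem

private lemma firstNbr {Γ : SimpleGraph W} {N : Γ.Subgraph} {w : W}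
    (c : Γ.Walk w w) (hnil : ¬ c.Nil) (hE : ∀ e ∈ c.edges, e ∈ N.edgeSet) :
    ∃ x, N.Adj w x ∧ c.edges.head? = some s(w, x) := by
  cases c with
  | nil => simp at hnil
  | @cons _ b _ h q => exact ⟨b, Subgraph.mem_edgeSet.mp (hE _ (by simp)), by simp⟩

private lemma not_mem_support_of_cycle {Γ : SimpleGraph W} {N : Γ.Subgraph} {x w : W}
    (c : Γ.Walk x x) (hc : c.IsCycle) (hE : ∀ e ∈ c.edges, e ∈ N.edgeSet)
    (hw : (N.neighborSet w).Subsingleton) : w ∉ c.support := by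
  classical
  intro hmem
  set c' := c.rotate w hmem with hc'def
  have hcyc : c'.IsCycle := hc.rotate hmem
  have hE' : ∀ e ∈ c'.edges, e ∈ N.edgeSet := fun e he =>
    hE e ((c.rotate_edges w hmem).mem_iff.mp he)
  have hnil : ¬ c'.Nil := hcyc.not_nil
  obtain ⟨x₁, hx₁, hh₁⟩ := firstNbr c' hnil hE'
  have hnil2 : ¬ c'.reverse.Nil := by
    rw [Walk.nil_iff_length_eq] at hnil ⊢
    rwa [Walk.length_reverse]
  obtain ⟨x₂, hx₂, hh₂⟩ := firstNbr c'.reverse hnil2 (by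
    intro e he; apply hE'; rwa [Walk.edges_reverse, List.mem_reverse] at he)
  have hx : x₁ = x₂ := hw hx₁ hx₂
  rw [Walk.edges_reverse, List.head?_reverse] at hh₂
  have hnodup : c'.edges.Nodup := hcyc.isCircuit.isTrail.edges_nodup
  obtain ⟨l, hl⟩ : ∃ l, c'.edges = s(w, x₁) :: l := by
    cases hE0 : c'.edges with
    | nil => rw [hE0] at hh₁; simp at hh₁
    | cons e t =>
      rw [hE0] at hh₁
      simp only [List.head?_cons, Option.some.injEq] at hh₁
      exact ⟨t, by rw [hh₁]⟩
  have hlne : l ≠ [] := by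
    have hL := c'.length_edges
    have h3 := hcyc.three_le_length
    rw [hl] at hL
    intro h0
    rw [h0] at hL
    simp at hL
    omega
  rw [hl] at hh₂ hnodup
  rw [← hx] at hh₂
  exact head_ne_last hnodup hlne hh₂

private lemma edges_map_hom_mem {Γ : SimpleGraph W} {N : Γ.Subgraph} {x y : N.verts}
    (p : N.coe.Walk x y) : ∀ e ∈ (p.map N.hom).edges, e ∈ N.edgeSet := by
  intro e he
  rw [Walk.edges_map, List.mem_map] at he
  obtain ⟨e', he', rfl⟩ := he
  revert he'
  induction e' using Sym2.ind with
  | _ u v =>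
    intro he'
    have hadj : N.coe.Adj u v := Walk.adj_of_mem_edges p he'
    rw [Sym2.map_pair_eq]
    exact Subgraph.mem_edgeSet.mpr hadj

private lemma exists_preimage_walk {GA : SimpleGraph A} {f : A ↪ B} :
    ∀ {u v : B} (p : (GA.map f).Walk u v) {x y : A}, u = f x → v = f y →
      ∃ p' : GA.Walk x y, p'.edges.map (Sym2.map f) = p.edges ∧ p'.support.map f = p.support := by
  intro u v p
  induction p with
  | nil =>
    intro x y hu hv
    have hxy : x = y := f.injective (hu.symm.trans hv)
    subst hxy
    exact ⟨Walk.nil, by simp, by simp [hu]⟩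
  | @cons u w v h q ih =>
    intro x y hu hv
    obtain ⟨-, a, bb, hab, ha, hb⟩ := h
    have hax : a = x := f.injective (ha.trans hu)
    subst hax
    obtain ⟨q', h1, h2⟩ := ih hb.symm hv
    refine ⟨Walk.cons hab q', ?_, ?_⟩
    · simp [h1, Sym2.map_pair_eq, ha, hb]; rfl
    · simp [h2, ha]; rfl

private lemma isAcyclic_map {GA : SimpleGraph A} (f : A ↪ B)
    (h : GA.IsAcyclic) : (GA.map f).IsAcyclic := by
  intro u c hc
  have hnil : ¬ c.Nil := hc.not_nil
  obtain ⟨x, hx⟩ : ∃ x, u = f x := by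
    cases c with
    | nil => simp at hnil
    | cons hadj q => obtain ⟨-, a, b, _, ha, _⟩ := hadj; exact ⟨a, ha.symm⟩
  obtain ⟨c', h1, h2⟩ := exists_preimage_walk c hx hx
  apply h c'
  rw [Walk.isCycle_def, Walk.isTrail_def]
  refine ⟨?_, ?_, ?_⟩
  · have hnd := hc.isCircuit.isTrail.edges_nodup
    rw [← h1] at hnd
    exact hnd.of_map _
  · intro hnil'
    have h3 := hc.three_le_length
    have hlen : c.edges.length = 0 := by rw [← h1, hnil']; simp
    rw [Walk.length_edges] at hlen
    omega
  · have hnd := hc.support_nodup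
    have ht : c'.support.tail.map f = c.support.tail := by rw [← h2, List.map_tail]
    rw [← ht] at hnd
    exact hnd.of_map _

private lemma isTree_of_iso {GA : SimpleGraph A} {GB : SimpleGraph B}
    (e : GA ≃g GB) (h : GA.IsTree) : GB.IsTree := by
  refine ⟨e.connected_iff.mp h.1, ?_⟩
  intro v c hc
  exact h.2 _ ((Walk.map_isCycle_iff_of_injective (f := e.symm.toHom) (show Function.Injective ⇑e.symm.toHom from e.symm.toEquiv.injective)).mpr hc)

private noncomputable def mapCoeIso {GA : SimpleGraph A} {GB : SimpleGraph B}
    (f : GA →g GB) (hf : Function.Injective f) (T : GA.Subgraph) :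
    T.coe ≃g (T.map f).coe where
  toEquiv := (Equiv.Set.image f T.verts hf).trans
    (Equiv.setCongr (Subgraph.map_verts f T).symm)
  map_rel_iff' := by
    intro x y
    simp only [Equiv.trans_apply, Equiv.Set.image_apply, Equiv.setCongr_apply,
      Subgraph.coe_adj, Subgraph.map_adj]
    constructor
    · rintro ⟨a, b, hab, ha, hb⟩
      rw [← hf ha, ← hf hb]
      exact hab
    · intro hxy
      exact ⟨x, y, hxy, rfl, rfl⟩

private lemma map_neighborSet' {GA : SimpleGraph A} {GB : SimpleGraph B}
    (f : GA →g GB) (hf : Function.Injective f) (T : GA.Subgraph) (v : A) :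
    (T.map f).neighborSet (f v) = f '' T.neighborSet v := by
  ext w
  simp only [Subgraph.mem_neighborSet, Subgraph.map_adj, Set.mem_image]
  constructor
  · rintro ⟨a, b, hab, ha, rfl⟩
    exact ⟨b, by rwa [← hf ha], rfl⟩
  · rintro ⟨b, hb, rfl⟩
    exact ⟨v, b, hb, rfl, rfl⟩

private lemma map_edgeSet' {GA : SimpleGraph A} {GB : SimpleGraph B}
    (f : GA →g GB) (T : GA.Subgraph) :
    (T.map f).edgeSet = Sym2.map f '' T.edgeSet := by
  ext e
  induction e using Sym2.ind with
  | _ p q =>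
    simp only [Subgraph.mem_edgeSet, Subgraph.map_adj, Set.mem_image]
    constructor
    · rintro ⟨x, y, hxy, rfl, rfl⟩
      exact ⟨s(x, y), hxy, Sym2.map_pair_eq _ _ _⟩
    · rintro ⟨e', he', heq⟩
      revert he' heq
      induction e' using Sym2.ind with
      | _ x y =>
        intro he' heq
        rw [Sym2.map_pair_eq, Sym2.eq_iff] at heq
        rcases heq with ⟨rfl, rfl⟩ | ⟨rfl, rfl⟩
        · exact ⟨x, y, he', rfl, rfl⟩
        · exact ⟨y, x, T.adj_symm he', rfl, rfl⟩

private lemma connected_sdiff {H : SimpleGraph W} {v w : W}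
    (hc : H.Connected)
    (hr : (H \ fromEdgeSet {s(v, w)}).Reachable v w) :
    (H \ fromEdgeSet {s(v, w)}).Connected := by
  rw [connected_iff] at hc ⊢
  refine ⟨?_, hc.2⟩
  have key : ∀ {x y : W}, H.Walk x y → (H \ fromEdgeSet {s(v, w)}).Reachable x y := by
    intro x y p
    induction p with
    | nil => exact Reachable.refl _
    | @cons u b y h q ih =>
      refine Reachable.trans ?_ ih
      by_cases he : s(u, b) = s(v, w)
      · rw [Sym2.eq_iff] at he
        rcases he with ⟨rfl, rfl⟩ | ⟨rfl, rfl⟩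
        · exact hr
        · exact hr.symm
      · refine Adj.reachable ?_
        rw [sdiff_adj]
        refine ⟨h, fun hf => he ?_⟩
        rw [fromEdgeSet_adj] at hf
        simpa using hf.1
  intro x y
  exact (hc.1 x y).elim fun p => key p

private lemma exists_tree [Fintype W] (H : SimpleGraph W) (hc : H.Connected) :
    ∃ T, T ≤ H ∧ T.IsTree := by
  classical
  suffices h : ∀ (n : ℕ) (H : SimpleGraph W), H.Connected → H.edgeSet.ncard = n →
      ∃ T, T ≤ H ∧ T.IsTree by exact h _ H hc rfl
  intro n
  induction n using Nat.strong_induction_on with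
  | _ n ih =>
    intro H hc hn
    by_cases ha : H.IsAcyclic
    · exact ⟨H, le_rfl, hc, ha⟩
    · rw [isAcyclic_iff_forall_adj_isBridge] at ha
      push_neg at ha
      obtain ⟨v, w, hadj, hbr⟩ := ha
      have hr : (H \ fromEdgeSet {s(v, w)}).Reachable v w := by
        by_contra hre
        exact hbr (isBridge_iff.mpr hre)
      have hconn := connected_sdiff hc hr
      have hcard : (H \ fromEdgeSet {s(v, w)}).edgeSet.ncard < n := by
        have hE : (H \ fromEdgeSet {s(v, w)}).edgeSet = H.edgeSet \ {s(v, w)} := by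
          rw [edgeSet_sdiff, edgeSet_fromEdgeSet, edgeSet_sdiff_sdiff_isDiag]
        rw [hE, ← hn]
        exact Set.ncard_diff_singleton_lt_of_mem hadj H.edgeSet.toFinite
      obtain ⟨T, hle, hT⟩ := ih _ hcard _ hconn rfl
      exact ⟨T, hle.trans sdiff_le, hT⟩

end Helpers

section PendTree

variable {α V : Type*}

/-- homomorphism of the tree into the fiber over `u'`. -/
private def fiberHom (G : SimpleGraph α) (H : SimpleGraph V) {T₀ : SimpleGraph V}
    (hle : T₀ ≤ H) (u' : α) : T₀ →g G □ H where
  toFun := fun v => (u', v)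
  map_rel' := fun {x y} hxy => boxProd_adj.mpr (Or.inr ⟨hle hxy, rfl⟩)

@[simp] private lemma fiberHom_apply (G : SimpleGraph α) (H : SimpleGraph V) {T₀ : SimpleGraph V}
    (hle : T₀ ≤ H) (u' : α) (v : V) : fiberHom G H hle u' v = (u', v) := rfl

private lemma crossAdj {G : SimpleGraph α} (H : SimpleGraph V) {u₁ u' : α} (hu : G.Adj u₁ u')
    (x : V) : (G □ H).Adj (u₁, x) (u', x) :=
  boxProd_adj.mpr (Or.inl ⟨hu, rfl⟩)

private def pendTree {G : SimpleGraph α} {H : SimpleGraph V} {T₀ : SimpleGraph V}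
    (hle : T₀ ≤ H) {u₁ u' : α} (hu : G.Adj u₁ u') (a b c : V) : (G □ H).Subgraph :=
  Subgraph.map (fiberHom G H hle u') ⊤ ⊔ (G □ H).subgraphOfAdj (crossAdj H hu a) ⊔
    (G □ H).subgraphOfAdj (crossAdj H hu b) ⊔ (G □ H).subgraphOfAdj (crossAdj H hu c)

variable {G : SimpleGraph α} {H : SimpleGraph V} {T₀ : SimpleGraph V}
  {hle : T₀ ≤ H} {u₁ u' : α} {hu : G.Adj u₁ u'} {a b c : V}

private lemma pendTree_adj {p q : α × V} :
    (pendTree hle hu a b c).Adj p q ↔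
      (∃ x y, T₀.Adj x y ∧ (u', x) = p ∧ (u', y) = q) ∨
      (∃ x, x ∈ ({a, b, c} : Set V) ∧
        ((p = (u₁, x) ∧ q = (u', x)) ∨ (q = (u₁, x) ∧ p = (u', x)))) := by
  simp only [pendTree, Subgraph.sup_adj, Subgraph.map_adj, Relation.Map, Subgraph.top_adj,
    subgraphOfAdj_adj, Sym2.eq_iff, fiberHom_apply]
  constructor
  · rintro (((⟨x, y, hxy, hx, hy⟩ | h) | h) | h)
    · exact Or.inl ⟨x, y, hxy, hx, hy⟩
    · rcases h with ⟨h1, h2⟩ | ⟨h1, h2⟩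
      · exact Or.inr ⟨a, by simp, Or.inl ⟨h1.symm, h2.symm⟩⟩
      · exact Or.inr ⟨a, by simp, Or.inr ⟨h1.symm, h2.symm⟩⟩
    · rcases h with ⟨h1, h2⟩ | ⟨h1, h2⟩
      · exact Or.inr ⟨b, by simp, Or.inl ⟨h1.symm, h2.symm⟩⟩
      · exact Or.inr ⟨b, by simp, Or.inr ⟨h1.symm, h2.symm⟩⟩
    · rcases h with ⟨h1, h2⟩ | ⟨h1, h2⟩
      · exact Or.inr ⟨c, by simp, Or.inl ⟨h1.symm, h2.symm⟩⟩
      · exact Or.inr ⟨c, by simp, Or.inr ⟨h1.symm, h2.symm⟩⟩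
  · rintro (⟨x, y, hxy, hx, hy⟩ | ⟨x, hx, h⟩)
    · exact Or.inl (Or.inl (Or.inl ⟨x, y, hxy, hx, hy⟩))
    · simp only [Set.mem_insert_iff, Set.mem_singleton_iff] at hx
      rcases hx with rfl | rfl | rfl
      · rcases h with ⟨h1, h2⟩ | ⟨h1, h2⟩
        · exact Or.inl (Or.inl (Or.inr (Or.inl ⟨h1.symm, h2.symm⟩)))
        · exact Or.inl (Or.inl (Or.inr (Or.inr ⟨h1.symm, h2.symm⟩)))
      · rcases h with ⟨h1, h2⟩ | ⟨h1, h2⟩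
        · exact Or.inl (Or.inr (Or.inl ⟨h1.symm, h2.symm⟩))
        · exact Or.inl (Or.inr (Or.inr ⟨h1.symm, h2.symm⟩))
      · rcases h with ⟨h1, h2⟩ | ⟨h1, h2⟩
        · exact Or.inr (Or.inl ⟨h1.symm, h2.symm⟩)
        · exact Or.inr (Or.inr ⟨h1.symm, h2.symm⟩)

private lemma pendTree_verts :
    (pendTree hle hu a b c).verts =
      (Set.range fun v => (u', v)) ∪ {(u₁, a), (u₁, b), (u₁, c)} := by
  ext p
  simp only [pendTree, Subgraph.verts_sup, Subgraph.map_verts, Subgraph.verts_top,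
    Set.image_univ, subgraphOfAdj_verts, Set.mem_union, Set.mem_range, Set.mem_insert_iff,
    Set.mem_singleton_iff, fiberHom_apply]
  constructor
  · rintro ((((⟨x, rfl⟩ | (h | h)) | (h | h)) | (h | h)))
    · exact Or.inl ⟨x, rfl⟩
    all_goals subst h
    · exact Or.inr (Or.inl rfl)
    · exact Or.inl ⟨a, rfl⟩
    · exact Or.inr (Or.inr (Or.inl rfl))
    · exact Or.inl ⟨b, rfl⟩
    · exact Or.inr (Or.inr (Or.inr rfl))
    · exact Or.inl ⟨c, rfl⟩
  · rintro (⟨x, rfl⟩ | (rfl | rfl | rfl))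
    · exact Or.inl (Or.inl (Or.inl ⟨x, rfl⟩))
    · exact Or.inl (Or.inl (Or.inr (Or.inl rfl)))
    · exact Or.inl (Or.inr (Or.inl rfl))
    · exact Or.inr (Or.inl rfl)

private lemma pendTree_neighborSet (hne : u' ≠ u₁) {x : V} (hx : x ∈ ({a, b, c} : Set V)) :
    (pendTree hle hu a b c).neighborSet (u₁, x) = {(u', x)} := by
  ext q
  rw [Subgraph.mem_neighborSet, pendTree_adj, Set.mem_singleton_iff]
  constructor
  · rintro (⟨y, z, hyz, hy, hz⟩ | ⟨y, hy, (⟨h1, h2⟩ | ⟨h1, h2⟩)⟩)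
    · exact absurd (congrArg Prod.fst hy) hne
    · have hxy : x = y := congrArg Prod.snd h1
      rw [h2, ← hxy]
    · exact absurd (congrArg Prod.fst h2).symm hne
  · rintro rfl
    exact Or.inr ⟨x, hx, Or.inl ⟨rfl, rfl⟩⟩

end PendTree

section More

variable {α V : Type*} {G : SimpleGraph α} {H : SimpleGraph V} {T₀ : SimpleGraph V}
  {hle : T₀ ≤ H} {u₁ u' u'' : α} {a b c : V}

private lemma pendTree_isTree (hu : G.Adj u₁ u') (hT : T₀.IsTree) :
    (pendTree hle hu a b c).coe.IsTree := by
  classical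
  have hne : u' ≠ u₁ := hu.ne'
  constructor
  · -- connected
    have hMT : (Subgraph.map (fiberHom G H hle u') (⊤ : T₀.Subgraph)).Connected := by
      rw [Subgraph.connected_iff_forall_exists_walk_subgraph]
      refine ⟨⟨(u', a), ⟨a, trivial, rfl⟩⟩, ?_⟩
      intro p q hp hq
      obtain ⟨x, -, rfl⟩ := hp
      obtain ⟨y, -, rfl⟩ := hq
      obtain ⟨w⟩ := hT.1.preconnected x y
      refine ⟨w.map (fiberHom G H hle u'), ?_⟩
      rw [Walk.toSubgraph_map]
      exact Subgraph.map_mono le_top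
    have h1 := Subgraph.connected_sup hMT.preconnected (Subgraph.subgraphOfAdj_connected (crossAdj H hu a)).preconnected
      ⟨(u', a), ⟨a, trivial, rfl⟩, by simp⟩
    have h2 := Subgraph.connected_sup h1.preconnected (Subgraph.subgraphOfAdj_connected (crossAdj H hu b)).preconnected
      ⟨(u', b), Or.inl ⟨b, trivial, rfl⟩, by simp⟩
    have h3 := Subgraph.connected_sup h2.preconnected (Subgraph.subgraphOfAdj_connected (crossAdj H hu c)).preconnected
      ⟨(u', c), Or.inl (Or.inl ⟨c, trivial, rfl⟩), by simp⟩
    exact h3.coe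
  · -- acyclic
    intro z cc hcc
    have hcyc2 : (cc.map (pendTree hle hu a b c).hom).IsCycle :=
      (Walk.map_isCycle_iff_of_injective Subgraph.hom_injective).mpr hcc
    have hE : ∀ e ∈ (cc.map (pendTree hle hu a b c).hom).edges,
        e ∈ (pendTree hle hu a b c).edgeSet := edges_map_hom_mem cc
    have hpend : ∀ x ∈ ({a, b, c} : Set V),
        (u₁, x) ∉ (cc.map (pendTree hle hu a b c).hom).support := by
      intro x hx
      refine not_mem_support_of_cycle _ hcyc2 hE ?_
      rw [pendTree_neighborSet hne hx]
      exact Set.subsingleton_singleton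
    have hEF : ∀ ed ∈ (cc.map (pendTree hle hu a b c).hom).edges,
        ed ∈ (T₀.map (⟨fun v => (u', v), fun x y hxy => congrArg Prod.snd hxy⟩ : V ↪ α × V)).edgeSet := by
      intro ed hed
      revert hed
      induction ed using Sym2.ind with
      | _ p q =>
        intro hed
        have hadj := Subgraph.mem_edgeSet.mp (hE _ hed)
        rw [pendTree_adj] at hadj
        rcases hadj with ⟨x, y, hxy, hx, hy⟩ | ⟨x, hx, h⟩
        · rw [SimpleGraph.mem_edgeSet]
          exact (map_adj _ _ _ _).mpr ⟨x, y, hxy, hx, hy⟩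
        · exfalso
          rcases h with ⟨rfl, -⟩ | ⟨rfl, -⟩
          · exact hpend x hx (Walk.fst_mem_support_of_mem_edges _ hed)
          · exact hpend x hx (Walk.snd_mem_support_of_mem_edges _ hed)
    exact isAcyclic_map _ hT.2 _ (hcyc2.transfer hEF)

private lemma pendTree_isPendant (hu : G.Adj u₁ u') (hT : T₀.IsTree) :
    IsPendantSteinerTree (G □ H) {(u₁, a), (u₁, b), (u₁, c)} (pendTree hle hu a b c) := by
  have hne : u' ≠ u₁ := hu.ne'
  refine ⟨pendTree_isTree hu hT, ?_, ?_⟩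
  · rw [pendTree_verts]
    intro p hp
    exact Or.inr hp
  · intro v hv
    simp only [Set.mem_insert_iff, Set.mem_singleton_iff] at hv
    rcases hv with rfl | rfl | rfl
    · rw [pendTree_neighborSet hne (by simp)]; exact Set.ncard_singleton _
    · rw [pendTree_neighborSet hne (by simp)]; exact Set.ncard_singleton _
    · rw [pendTree_neighborSet hne (by simp)]; exact Set.ncard_singleton _

private lemma pendTree_disjoint (hu : G.Adj u₁ u') (hu2 : G.Adj u₁ u'') (hne : u' ≠ u'') :
    InternallyDisjoint (G □ H) {(u₁, a), (u₁, b), (u₁, c)}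
      (pendTree hle hu a b c) (pendTree hle hu2 a b c) := by
  have hne₁ : u' ≠ u₁ := hu.ne'
  have hne₂ : u'' ≠ u₁ := hu2.ne'
  constructor
  · ext ed
    simp only [Set.mem_inter_iff, Set.mem_empty_iff_false, iff_false]
    induction ed using Sym2.ind with
    | _ p q =>
      rintro ⟨h1, h2⟩
      rw [Subgraph.mem_edgeSet, pendTree_adj] at h1 h2
      rcases h1 with ⟨x, y, -, hx, hy⟩ | ⟨x, -, h⟩ <;>
        rcases h2 with ⟨x', y', -, hx', hy'⟩ | ⟨x', -, h'⟩
      · exact hne (congrArg Prod.fst (hx.trans hx'.symm))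
      · rcases h' with ⟨hp, -⟩ | ⟨-, hp⟩
        · exact hne₁ (congrArg Prod.fst (hx.trans hp))
        · exact hne (congrArg Prod.fst (hx.trans hp))
      · rcases h with ⟨hp, -⟩ | ⟨-, hp⟩
        · exact hne₂ (congrArg Prod.fst (hx'.trans hp))
        · exact hne.symm (congrArg Prod.fst (hx'.trans hp))
      · rcases h with ⟨hp, hq⟩ | ⟨hq, hp⟩ <;> rcases h' with ⟨hp', hq'⟩ | ⟨hq', hp'⟩
        · exact hne (congrArg Prod.fst (hq.symm.trans hq'))
        · exact hne₂ (congrArg Prod.fst (hp.symm.trans hp')).symm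
        · exact hne₁ (congrArg Prod.fst (hp.symm.trans hp'))
        · exact hne (congrArg Prod.fst (hp.symm.trans hp'))
  · rw [pendTree_verts, pendTree_verts]
    ext p
    simp only [Set.mem_inter_iff, Set.mem_union, Set.mem_range, Set.mem_insert_iff,
      Set.mem_singleton_iff]
    constructor
    · rintro ⟨⟨x, rfl⟩ | hp, hq⟩
      · rcases hq with ⟨y, hy⟩ | (h | h | h)
        · exact absurd (congrArg Prod.fst hy) hne.symm
        all_goals exact absurd (congrArg Prod.fst h) hne₁
      · exact hp
    · intro hp
      exact ⟨Or.inr hp, Or.inr hp⟩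

private lemma internallyDisjoint_symm {W : Type*} {Γ : SimpleGraph W} {S : Set W}
    {T T' : Γ.Subgraph} (h : InternallyDisjoint Γ S T T') : InternallyDisjoint Γ S T' T :=
  ⟨by rw [Set.inter_comm]; exact h.1, by rw [Set.inter_comm]; exact h.2⟩

private lemma fiberTree_isPendant (G : SimpleGraph α) {TH : H.Subgraph}
    (h : IsPendantSteinerTree H {a, b, c} TH) (u₁ : α) :
    IsPendantSteinerTree (G □ H) {(u₁, a), (u₁, b), (u₁, c)}
      (TH.map (G.boxProdRight H u₁).toHom) := by
  obtain ⟨ht, hsub, hnb⟩ := h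
  have hinj : Function.Injective ((G.boxProdRight H u₁).toHom : V → α × V) :=
    fun x y h => congrArg Prod.snd h
  refine ⟨isTree_of_iso (mapCoeIso _ hinj TH) ht, ?_, ?_⟩
  · intro p hp
    simp only [Set.mem_insert_iff, Set.mem_singleton_iff] at hp
    rcases hp with rfl | rfl | rfl
    · exact ⟨a, hsub (by simp), rfl⟩
    · exact ⟨b, hsub (by simp), rfl⟩
    · exact ⟨c, hsub (by simp), rfl⟩
  · intro v hv
    simp only [Set.mem_insert_iff, Set.mem_singleton_iff] at hv
    rcases hv with rfl | rfl | rfl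
    · rw [show ((u₁, a) : α × V) = (G.boxProdRight H u₁).toHom a from rfl,
        map_neighborSet' _ hinj, Set.ncard_image_of_injective _ hinj]
      exact hnb a (by simp)
    · rw [show ((u₁, b) : α × V) = (G.boxProdRight H u₁).toHom b from rfl,
        map_neighborSet' _ hinj, Set.ncard_image_of_injective _ hinj]
      exact hnb b (by simp)
    · rw [show ((u₁, c) : α × V) = (G.boxProdRight H u₁).toHom c from rfl,
        map_neighborSet' _ hinj, Set.ncard_image_of_injective _ hinj]
      exact hnb c (by simp)

private lemma fiberTree_disjoint (G : SimpleGraph α) {TH TH' : H.Subgraph}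
    (h : InternallyDisjoint H {a, b, c} TH TH') (u₁ : α) :
    InternallyDisjoint (G □ H) {(u₁, a), (u₁, b), (u₁, c)}
      (TH.map (G.boxProdRight H u₁).toHom) (TH'.map (G.boxProdRight H u₁).toHom) := by
  obtain ⟨hE, hV⟩ := h
  have hinj : Function.Injective ((G.boxProdRight H u₁).toHom : V → α × V) :=
    fun x y h => congrArg Prod.snd h
  constructor
  · rw [map_edgeSet', map_edgeSet', ← Set.image_inter (Sym2.map.injective hinj), hE,
      Set.image_empty]
  · rw [Subgraph.map_verts, Subgraph.map_verts, ← Set.image_inter hinj, hV]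
    simp [Set.image_insert_eq]

private lemma pend_fiber_disjoint (hu : G.Adj u₁ u') {TH : H.Subgraph}
    (hsub : ({a, b, c} : Set V) ⊆ TH.verts) :
    InternallyDisjoint (G □ H) {(u₁, a), (u₁, b), (u₁, c)}
      (pendTree hle hu a b c) (TH.map (G.boxProdRight H u₁).toHom) := by
  have hne₁ : u' ≠ u₁ := hu.ne'
  constructor
  · ext ed
    simp only [Set.mem_inter_iff, Set.mem_empty_iff_false, iff_false]
    induction ed using Sym2.ind with
    | _ p q =>
      rintro ⟨h1, h2⟩
      rw [Subgraph.mem_edgeSet, pendTree_adj] at h1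
      obtain ⟨x', y', -, hx', hy'⟩ := h2
      rcases h1 with ⟨x, y, -, hx, hy⟩ | ⟨x, -, h⟩
      · exact hne₁ (congrArg Prod.fst (hx.trans hx'.symm))
      · rcases h with ⟨-, hq⟩ | ⟨-, hp⟩
        · exact hne₁ (congrArg Prod.fst (hq.symm.trans hy'.symm))
        · exact hne₁ (congrArg Prod.fst (hp.symm.trans hx'.symm))
  · rw [pendTree_verts, Subgraph.map_verts]
    ext p
    simp only [Set.mem_inter_iff, Set.mem_union, Set.mem_range, Set.mem_image,
      Set.mem_insert_iff, Set.mem_singleton_iff]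
    constructor
    · rintro ⟨⟨x, rfl⟩ | hp, y, hyv, hy⟩
      · exact absurd (congrArg Prod.fst hy) hne₁.symm
      · exact hp
    · intro hp
      refine ⟨Or.inr hp, ?_⟩
      rcases hp with rfl | rfl | rfl
      · exact ⟨a, hsub (by simp), rfl⟩
      · exact ⟨b, hsub (by simp), rfl⟩
      · exact ⟨c, hsub (by simp), rfl⟩

end More

end

theorem stmt18 {α V : Type*} [Fintype α] [Fintype V] (G : SimpleGraph α) (H : SimpleGraph V)
    (hG : G.Connected) (hH : H.Connected) (k ℓ : ℕ)
    (hδ : k + 2 ≤ minDeg G)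
    (hτ : ∀ S : Finset V, S.card = 3 → HasPendantTrees H (↑S) ℓ)
    (u₁ : α) (a b c : V) (hab : a ≠ b) (hac : a ≠ c) (hbc : b ≠ c) :
    HasPendantTrees (G □ H) {(u₁, a), (u₁, b), (u₁, c)} (k + ℓ + 2) := by
  classical
  -- pick k+2 distinct neighbours of u₁ in G
  have hdeg : k + 2 ≤ (G.neighborSet u₁).ncard := hδ.trans (Nat.sInf_le ⟨u₁, rfl⟩)
  obtain ⟨t, hts, htc⟩ := Set.exists_subset_card_eq hdeg
  have htf : t.Finite := Set.toFinite t
  have hcardt : htf.toFinset.card = k + 2 := by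
    rw [← htc]; exact (Set.ncard_eq_toFinset_card t htf).symm
  let uE := htf.toFinset.equivFinOfCardEq hcardt
  let u : Fin (k + 2) → α := fun i => ↑(uE.symm i)
  have hu_inj : Function.Injective u := fun i j hij => by
    have h2 : uE.symm i = uE.symm j := Subtype.ext hij
    simpa using congrArg uE h2
  have hu_adj : ∀ i, G.Adj u₁ (u i) := fun i => hts (htf.mem_toFinset.mp (uE.symm i).2)
  -- a spanning tree of H
  obtain ⟨T₀, hT₀le, hT₀⟩ := exists_tree H hH
  -- the ℓ internally disjoint pendant Steiner trees of H on {a, b, c}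
  have hSHcard : ({a, b, c} : Finset V).card = 3 := by
    rw [Finset.card_insert_of_notMem (by simp [hab, hac]),
      Finset.card_insert_of_notMem (by simp [hbc]), Finset.card_singleton]
  obtain ⟨Tt, hTt, hTtdisj⟩ := hτ {a, b, c} hSHcard
  have hSHset : (↑({a, b, c} : Finset V) : Set V) = {a, b, c} := by simp
  have hTt' : ∀ i, IsPendantSteinerTree H {a, b, c} (Tt i) := fun i => by
    have := hTt i; rwa [hSHset] at this
  have hTtdisj' : ∀ i j, i ≠ j → InternallyDisjoint H {a, b, c} (Tt i) (Tt j) :=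
    fun i j hij => by have := hTtdisj i j hij; rwa [hSHset] at this
  -- the combined family
  refine ⟨fun i => if h : (i : ℕ) < k + 2 then pendTree hT₀le (hu_adj ⟨i, h⟩) a b c
    else (Tt ⟨(i : ℕ) - (k + 2), by omega⟩).map (G.boxProdRight H u₁).toHom, ?_, ?_⟩
  · intro i
    dsimp only
    by_cases h : (i : ℕ) < k + 2
    · rw [dif_pos h]
      exact pendTree_isPendant (hu_adj ⟨i, h⟩) hT₀
    · rw [dif_neg h]
      exact fiberTree_isPendant G (hTt' _) u₁
  · intro i j hij
    dsimp only
    by_cases hi : (i : ℕ) < k + 2 <;> by_cases hj : (j : ℕ) < k + 2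
    · rw [dif_pos hi, dif_pos hj]
      refine pendTree_disjoint _ _ (fun he => hij ?_)
      have h2 : (⟨(i : ℕ), hi⟩ : Fin (k + 2)) = ⟨(j : ℕ), hj⟩ := hu_inj he
      have h3 : (i : ℕ) = (j : ℕ) := by simpa using h2
      exact Fin.ext h3
    · rw [dif_pos hi, dif_neg hj]
      exact pend_fiber_disjoint (hu_adj ⟨i, hi⟩) ((hTt' _).2.1)
    · rw [dif_neg hi, dif_pos hj]
      exact internallyDisjoint_symm (pend_fiber_disjoint (hu_adj ⟨j, hj⟩) ((hTt' _).2.1))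
    · rw [dif_neg hi, dif_neg hj]
      refine fiberTree_disjoint G (hTtdisj' _ _ (fun he => hij ?_)) u₁
      have hval := congrArg Fin.val he
      simp only at hval
      refine Fin.ext ?_
      omega
end
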